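/- arXiv:2305.02250 — 4 statements merged into one kernel-verified Lean document; each statement's English description precedes it below -/
import Mathlib

section
/- Let ν be a lattice path and δ an increment vector for ν. The covering relations of the alt ν-Tamari poset T_ν(δ) are exactly the δ-rotations: for ν-paths μ, μ′, μ is covered by μ′ in T_ν(δ) if and only if μ′ is the δ-rotation of μ at some valley of μ. -/
/-!
Common definitions for the paper "The alt ν-Tamari lattices".

A lattice path ν from (0,0) to (m,n) is encoded as the list (ν_0, ..., ν_n)
of its east-step block lengths (ν_0 initial east steps, ν_i the east steps
immediately following the i-th north step).  Thus `ν.length = n + 1` and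
`ν.sum = m`.
-/

/-- `μ` is a ν-path: same endpoints as `ν` and weakly above `ν`. -/
def IsNuPath (ν μ : List ℕ) : Prop :=
  μ.length = ν.length ∧ (∀ j : ℕ, (μ.take j).sum ≤ (ν.take j).sum) ∧ μ.sum = ν.sum

/-! ### The ν-Dyck lattice -/

/-- The Dyck order: `P ≤ Q` iff `Q` lies weakly above `P`. -/
def dyckLE (P Q : List ℕ) : Prop := ∀ j : ℕ, (Q.take j).sum ≤ (P.take j).sum

/-- Covering relation of the ν-Dyck lattice. -/
def dyckCovBy (ν P Q : List ℕ) : Prop :=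
  IsNuPath ν P ∧ IsNuPath ν Q ∧ dyckLE P Q ∧ P ≠ Q ∧
    ∀ R, IsNuPath ν R → dyckLE P R → dyckLE R Q → R = P ∨ R = Q

/-- `[P,Q]` is a linear interval of length `ℓ` in the ν-Dyck lattice:
the interval is totally ordered and there is a maximal chain of length `ℓ`
from `P` to `Q`. -/
def IsDyckLinear (ν P Q : List ℕ) (ℓ : ℕ) : Prop :=
  IsNuPath ν P ∧ IsNuPath ν Q ∧ dyckLE P Q ∧
  (∀ R S, IsNuPath ν R → IsNuPath ν S → dyckLE P R → dyckLE R Q →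
    dyckLE P S → dyckLE S Q → dyckLE R S ∨ dyckLE S R) ∧
  ∃ c : ℕ → List ℕ, c 0 = P ∧ c ℓ = Q ∧ ∀ k, k < ℓ → dyckCovBy ν (c k) (c (k + 1))

/-- `[P,Q]` is a left interval in the ν-Dyck lattice: `Q` is obtained from `P`
by replacing a consecutive subword `E^ℓ N` by `N E^ℓ` (the `ℓ` east steps are
moved from the block before the `(i+1)`-st north step to the block after it). -/
def IsLeftDyck (ν P Q : List ℕ) (ℓ : ℕ) : Prop :=
  IsNuPath ν P ∧ IsNuPath ν Q ∧ 1 ≤ ℓ ∧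
  ∃ i, i + 1 < P.length ∧ ℓ ≤ P.getD i 0 ∧
    Q = (P.set i (P.getD i 0 - ℓ)).set (i + 1) (P.getD (i + 1) 0 + ℓ)

/-- `[P,Q]` is a right interval in the ν-Dyck lattice: `Q` is obtained from `P`
by replacing a consecutive subword `E N^ℓ` by `N^ℓ E`. -/
def IsRightDyck (ν P Q : List ℕ) (ℓ : ℕ) : Prop :=
  IsNuPath ν P ∧ IsNuPath ν Q ∧ 1 ≤ ℓ ∧
  ∃ i, i + ℓ < P.length ∧ 1 ≤ P.getD i 0 ∧ (∀ j, i < j → j < i + ℓ → P.getD j 0 = 0) ∧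
    Q = (P.set i (P.getD i 0 - 1)).set (i + ℓ) (P.getD (i + ℓ) 0 + 1)

/-! ### Increment vectors, δ-rotations and alt ν-Tamari posets -/

/-- `δ = (δ_1, …, δ_n)` is an increment vector with respect to `ν`:
`δ_i ≤ ν_i` for `1 ≤ i ≤ n`.  (List index `i` of `δ` holds `δ_{i+1}`.) -/
def IsIncrement (ν δ : List ℕ) : Prop :=
  δ.length + 1 = ν.length ∧ ∀ i, i < δ.length → δ.getD i 0 ≤ ν.getD (i + 1) 0

/-- `μ'` is the δ-rotation of `μ` at the valley preceding the `(i+1)`-st north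
step.  The δ-excursion starting with the `(i+1)`-st north step ends in block `k`
(the first block where the δ-altitude returns to its value at the valley), and
the east step of the valley is exchanged with this excursion, i.e. moved from
block `i` to block `k`. -/
def IsDeltaRotation (δ μ μ' : List ℕ) (i : ℕ) : Prop :=
  i + 1 < μ.length ∧ 1 ≤ μ.getD i 0 ∧
  ∃ k, i < k ∧ k < μ.length ∧
    (∑ t ∈ Finset.Ico i k, δ.getD t 0) ≤ (∑ t ∈ Finset.Ico (i + 1) (k + 1), μ.getD t 0) ∧
    (∀ k', i < k' → k' < k →
      (∑ t ∈ Finset.Ico (i + 1) (k' + 1), μ.getD t 0) < (∑ t ∈ Finset.Ico i k', δ.getD t 0)) ∧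
    μ' = (μ.set i (μ.getD i 0 - 1)).set k (μ.getD k 0 + 1)

/-- `Q` is obtained from `P` by a δ-rotation at some valley. -/
def DRot (δ P Q : List ℕ) : Prop := ∃ i, IsDeltaRotation δ P Q i

/-- The alt ν-Tamari order: reflexive transitive closure of δ-rotations. -/
def altLE (δ : List ℕ) : List ℕ → List ℕ → Prop := Relation.ReflTransGen (DRot δ)

/-- The path ν̌ = (ν̌_0, δ_1, …, δ_n) with ν̌_0 = Σν_i − Σδ_i. -/
def nuCheck (ν δ : List ℕ) : List ℕ := (ν.sum - δ.sum) :: δ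

/-- `μ'` is the ω-rotation (in the sense of the ν-Tamari lattice, defined via
the ω-altitude `alt_ω(x,y) = ω_0 + ⋯ + ω_y − x`) of `μ` at the valley preceding
the `(i+1)`-st north step: the east step of the valley is exchanged with the
subpath from the valley to the next lattice point of the same ω-altitude,
which ends in block `k`. -/
def IsNuRotation (ω μ μ' : List ℕ) (i : ℕ) : Prop :=
  i + 1 < μ.length ∧ 1 ≤ μ.getD i 0 ∧
  ∃ k, i < k ∧ k < μ.length ∧
    (ω.take (k + 1)).sum + (μ.take (i + 1)).sum ≤
      (ω.take (i + 1)).sum + (μ.take (k + 1)).sum ∧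
    (∀ k', i < k' → k' < k →
      (ω.take (i + 1)).sum + (μ.take (k' + 1)).sum <
        (ω.take (k' + 1)).sum + (μ.take (i + 1)).sum) ∧
    μ' = (μ.set i (μ.getD i 0 - 1)).set k (μ.getD k 0 + 1)

/-- The ω-Tamari order on ω-paths: closure of ω-rotations. -/
def tamLE (ω : List ℕ) : List ℕ → List ℕ → Prop :=
  Relation.ReflTransGen (fun P Q => ∃ i, IsNuRotation ω P Q i)

/-- Covering relation of the alt ν-Tamari poset `T_ν(δ)`. -/
def altCovBy (ν δ P Q : List ℕ) : Prop :=
  IsNuPath ν P ∧ IsNuPath ν Q ∧ altLE δ P Q ∧ P ≠ Q ∧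
    ∀ R, IsNuPath ν R → altLE δ P R → altLE δ R Q → R = P ∨ R = Q

/-- `[P,Q]` is a linear interval of length `ℓ` in the alt ν-Tamari poset. -/
def IsAltLinear (ν δ P Q : List ℕ) (ℓ : ℕ) : Prop :=
  IsNuPath ν P ∧ IsNuPath ν Q ∧ altLE δ P Q ∧
  (∀ R S, IsNuPath ν R → IsNuPath ν S → altLE δ P R → altLE δ R Q →
    altLE δ P S → altLE δ S Q → altLE δ R S ∨ altLE δ S R) ∧
  ∃ c : ℕ → List ℕ, c 0 = P ∧ c ℓ = Q ∧ ∀ k, k < ℓ → altCovBy ν δ (c k) (c (k + 1))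

/-! ### ω-trees -/

/-- The lattice points of the Ferrers diagram `F_ω` weakly above `ω`:
points `(x,y)` with `0 ≤ y ≤ n` and `x ≤ ω_0 + ⋯ + ω_y`. -/
def Lpts (ω : List ℕ) : Set (ℕ × ℕ) :=
  {p : ℕ × ℕ | p.2 < ω.length ∧ p.1 ≤ (ω.take (p.2 + 1)).sum}

/-- `p` and `q` are ω-incompatible: one is strictly southwest of the other and
the smallest rectangle containing them lies in `F_ω` (equivalently, its
bottom-right corner is a lattice point of `F_ω`). -/
def Incomp (ω : List ℕ) (p q : ℕ × ℕ) : Prop :=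
  ((p.1 < q.1 ∧ p.2 < q.2) ∨ (q.1 < p.1 ∧ q.2 < p.2)) ∧
    (max p.1 q.1, min p.2 q.2) ∈ Lpts ω

/-- All elements of `T` are pairwise ω-compatible. -/
def PairwiseCompat (ω : List ℕ) (T : Set (ℕ × ℕ)) : Prop :=
  ∀ p ∈ T, ∀ q ∈ T, ¬ Incomp ω p q

/-- An ω-tree: a maximal collection of pairwise ω-compatible points of `L_ω`. -/
def IsTree (ω : List ℕ) (T : Set (ℕ × ℕ)) : Prop :=
  T ⊆ Lpts ω ∧ PairwiseCompat ω T ∧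
    ∀ T', T ⊆ T' → T' ⊆ Lpts ω → PairwiseCompat ω T' → T' = T

/-- The ω-rotation of `T` at `q`: there are `p, r ∈ T` with `q` the lower-left
corner of the rectangle `p□r` (so `p` is above `q` in its column and `r` to the
right of `q` in its row), no other element of `T` lies in `p□r`, and `T'` is
obtained by replacing `q` by the upper-right corner of `p□r`. -/
def RotationAt (ω : List ℕ) (T : Set (ℕ × ℕ)) (q : ℕ × ℕ) (T' : Set (ℕ × ℕ)) : Prop :=
  ∃ p r, p ∈ T ∧ q ∈ T ∧ r ∈ T ∧ p.1 = q.1 ∧ q.2 < p.2 ∧ r.2 = q.2 ∧ q.1 < r.1 ∧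
    (∀ s ∈ T, q.1 ≤ s.1 → s.1 ≤ r.1 → q.2 ≤ s.2 → s.2 ≤ p.2 → s = p ∨ s = q ∨ s = r) ∧
    T' = insert (r.1, p.2) (T \ {q})

/-- `T'` is obtained from `T` by an ω-rotation. -/
def TreeRotation (ω : List ℕ) (T T' : Set (ℕ × ℕ)) : Prop := ∃ q, RotationAt ω T q T'

/-- One rotation step between ω-trees. -/
def tRot (ω : List ℕ) (T T' : Set (ℕ × ℕ)) : Prop :=
  IsTree ω T ∧ IsTree ω T' ∧ TreeRotation ω T T'

/-- The rotation order on ω-trees. -/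
def treeLE (ω : List ℕ) : Set (ℕ × ℕ) → Set (ℕ × ℕ) → Prop :=
  Relation.ReflTransGen (tRot ω)

/-- Covering relation of the rotation poset of ω-trees. -/
def treeCovBy (ω : List ℕ) (T T' : Set (ℕ × ℕ)) : Prop :=
  IsTree ω T ∧ IsTree ω T' ∧ treeLE ω T T' ∧ T ≠ T' ∧
    ∀ R, IsTree ω R → treeLE ω T R → treeLE ω R T' → R = T ∨ R = T'

/-- `[T,T']` is a linear interval of length `ℓ` in the rotation poset of ω-trees. -/
def IsTreeLinear (ω : List ℕ) (T T' : Set (ℕ × ℕ)) (ℓ : ℕ) : Prop :=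
  IsTree ω T ∧ IsTree ω T' ∧ treeLE ω T T' ∧
  (∀ R S, IsTree ω R → IsTree ω S → treeLE ω T R → treeLE ω R T' →
    treeLE ω T S → treeLE ω S T' → treeLE ω R S ∨ treeLE ω S R) ∧
  ∃ c : ℕ → Set (ℕ × ℕ), c 0 = T ∧ c ℓ = T' ∧ ∀ k, k < ℓ → treeCovBy ω (c k) (c (k + 1))

/-- `q 0, …, q ℓ` is a sequence of consecutive nodes of `T` in the same row,
ordered from left to right. -/
def ConsecRow (T : Set (ℕ × ℕ)) (q : ℕ → ℕ × ℕ) (ℓ : ℕ) : Prop :=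
  (∀ i, i ≤ ℓ → q i ∈ T) ∧ (∀ i, i ≤ ℓ → (q i).2 = (q 0).2) ∧
  (∀ i, i < ℓ → (q i).1 < (q (i + 1)).1) ∧
  (∀ i, i < ℓ → ∀ s ∈ T, s.2 = (q 0).2 → (q i).1 < s.1 → s.1 < (q (i + 1)).1 → False)

/-- `q 0, …, q ℓ` is a sequence of consecutive nodes of `T` in the same column,
ordered from bottom to top. -/
def ConsecCol (T : Set (ℕ × ℕ)) (q : ℕ → ℕ × ℕ) (ℓ : ℕ) : Prop :=
  (∀ i, i ≤ ℓ → q i ∈ T) ∧ (∀ i, i ≤ ℓ → (q i).1 = (q 0).1) ∧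
  (∀ i, i < ℓ → (q i).2 < (q (i + 1)).2) ∧
  (∀ i, i < ℓ → ∀ s ∈ T, s.1 = (q 0).1 → (q i).2 < s.2 → s.2 < (q (i + 1)).2 → False)

/-- `[T,T']` is a left interval of length `ℓ` in the rotation poset of ω-trees:
`T'` is obtained from `T` by applying `ℓ > 0` successive rotations at the first
`ℓ` nodes of a sequence `q 0, …, q ℓ` of consecutive nodes of `T` in the same
row, from left to right. -/
def IsLeftTreeItv (ω : List ℕ) (T T' : Set (ℕ × ℕ)) (ℓ : ℕ) : Prop :=
  IsTree ω T ∧ 1 ≤ ℓ ∧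
  ∃ q : ℕ → ℕ × ℕ, ConsecRow T q ℓ ∧
    ∃ c : ℕ → Set (ℕ × ℕ), c 0 = T ∧ c ℓ = T' ∧
      ∀ k, k < ℓ → RotationAt ω (c k) (q k) (c (k + 1))

/-- `[T,T']` is a right interval of length `ℓ` in the rotation poset of ω-trees:
`T'` is obtained from `T` by applying `ℓ > 0` successive rotations at the first
`ℓ` nodes of a sequence `q 0, …, q ℓ` of consecutive nodes of `T` in the same
column, from bottom to top. -/
def IsRightTreeItv (ω : List ℕ) (T T' : Set (ℕ × ℕ)) (ℓ : ℕ) : Prop :=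
  IsTree ω T ∧ 1 ≤ ℓ ∧
  ∃ q : ℕ → ℕ × ℕ, ConsecCol T q ℓ ∧
    ∃ c : ℕ → Set (ℕ × ℕ), c 0 = T ∧ c ℓ = T' ∧
      ∀ k, k < ℓ → RotationAt ω (c k) (q k) (c (k + 1))

/-! ### (δ,ν)-trees -/

/-- The lattice points `L_{δ,ν}` of the shape `F_{δ,ν}`: points of `L_ν̌` lying
weakly above the path ν̂ = W^{ν_0} N W^{ν_1−δ_1} ⋯ N W^{ν_n−δ_n} starting at
`(ν̌_0, 0)`.  At height `y` these are the `x` with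
`ν̌_0 − ν_0 − Σ_{i≤y}(ν_i−δ_i) ≤ x ≤ ν̌_0 + δ_1 + ⋯ + δ_y`, written here without
natural subtraction. -/
def Ldn (ν δ : List ℕ) : Set (ℕ × ℕ) :=
  {p : ℕ × ℕ | p.2 < ν.length ∧
    ν.sum ≤ p.1 + (ν.take (p.2 + 1)).sum + (δ.drop p.2).sum ∧
    p.1 ≤ ((nuCheck ν δ).take (p.2 + 1)).sum}

/-- A (δ,ν)-tree: a maximal collection of pairwise ν̌-compatible points of `L_{δ,ν}`. -/
def IsDNTree (ν δ : List ℕ) (T : Set (ℕ × ℕ)) : Prop :=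
  T ⊆ Ldn ν δ ∧ PairwiseCompat (nuCheck ν δ) T ∧
    ∀ T', T ⊆ T' → T' ⊆ Ldn ν δ → PairwiseCompat (nuCheck ν δ) T' → T' = T

/-- One ν̌-rotation step between (δ,ν)-trees. -/
def dnRot (ν δ : List ℕ) (T T' : Set (ℕ × ℕ)) : Prop :=
  IsDNTree ν δ T ∧ IsDNTree ν δ T' ∧ TreeRotation (nuCheck ν δ) T T'

/-- The rotation order on (δ,ν)-trees. -/
def dnLE (ν δ : List ℕ) : Set (ℕ × ℕ) → Set (ℕ × ℕ) → Prop :=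
  Relation.ReflTransGen (dnRot ν δ)

/-- Covering relation of the rotation poset of (δ,ν)-trees. -/
def dnCovBy (ν δ : List ℕ) (T T' : Set (ℕ × ℕ)) : Prop :=
  IsDNTree ν δ T ∧ IsDNTree ν δ T' ∧ dnLE ν δ T T' ∧ T ≠ T' ∧
    ∀ R, IsDNTree ν δ R → dnLE ν δ T R → dnLE ν δ R T' → R = T ∨ R = T'

/-- `[T,T']` is a left interval of length `ℓ` in the rotation poset of (δ,ν)-trees. -/
def IsLeftDNItv (ν δ : List ℕ) (T T' : Set (ℕ × ℕ)) (ℓ : ℕ) : Prop :=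
  IsDNTree ν δ T ∧ 1 ≤ ℓ ∧
  ∃ q : ℕ → ℕ × ℕ, ConsecRow T q ℓ ∧
    ∃ c : ℕ → Set (ℕ × ℕ), c 0 = T ∧ c ℓ = T' ∧
      ∀ k, k < ℓ → RotationAt (nuCheck ν δ) (c k) (q k) (c (k + 1))

/-- `[T,T']` is a right interval of length `ℓ` in the rotation poset of (δ,ν)-trees. -/
def IsRightDNItv (ν δ : List ℕ) (T T' : Set (ℕ × ℕ)) (ℓ : ℕ) : Prop :=
  IsDNTree ν δ T ∧ 1 ≤ ℓ ∧
  ∃ q : ℕ → ℕ × ℕ, ConsecCol T q ℓ ∧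
    ∃ c : ℕ → Set (ℕ × ℕ), c 0 = T ∧ c ℓ = T' ∧
      ∀ k, k < ℓ → RotationAt (nuCheck ν δ) (c k) (q k) (c (k + 1))

/-! ### Row vectors, column vectors, reduced column vectors -/

/-- Number of points of `T` at height `y`. -/
noncomputable def rowN (T : Set (ℕ × ℕ)) (y : ℕ) : ℕ := {p ∈ T | p.2 = y}.ncard

/-- Number of points of `T` in column `x`. -/
noncomputable def colTN (T : Set (ℕ × ℕ)) (x : ℕ) : ℕ := {p ∈ T | p.1 = x}.ncard

/-- Number of points of `L_{δ,ν}` in column `x`. -/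
noncomputable def colN (ν δ : List ℕ) (x : ℕ) : ℕ := {p ∈ Ldn ν δ | p.1 = x}.ncard

/-- `p` is a relevant point of `L_{δ,ν}`: it is not the leftmost point of its row. -/
def Relevant (ν δ : List ℕ) (p : ℕ × ℕ) : Prop :=
  p ∈ Ldn ν δ ∧ ∃ q ∈ Ldn ν δ, q.2 = p.2 ∧ q.1 < p.1

/-- Number of relevant points of `L_{δ,ν}` in column `x` (the reduced column at `x`). -/
noncomputable def rcolN (ν δ : List ℕ) (x : ℕ) : ℕ := {p ∈ Ldn ν δ | p.1 = x ∧ Relevant ν δ p}.ncard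

/-- Number of points of `T` in the reduced column at `x`. -/
noncomputable def rcolTN (ν δ : List ℕ) (T : Set (ℕ × ℕ)) (x : ℕ) : ℕ :=
  {p ∈ T | p.1 = x ∧ Relevant ν δ p}.ncard

/-- `j` lists the columns `j 0, …, j m` of `L_{δ,ν}` from shortest to longest,
reading from right to left among columns of equal length (here `m = ν.sum`). -/
def ColOrder (ν δ : List ℕ) (j : ℕ → ℕ) : Prop :=
  (∀ i, i ≤ ν.sum → j i ≤ ν.sum) ∧
  (∀ i i', i ≤ ν.sum → i' ≤ ν.sum → j i = j i' → i = i') ∧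
  (∀ i i', i < i' → i' ≤ ν.sum →
    colN ν δ (j i) < colN ν δ (j i') ∨ (colN ν δ (j i) = colN ν δ (j i') ∧ j i' < j i))

/-- `j` lists the reduced columns `j 0, …, j (m-1)` of `L_{δ,ν}` from shortest to
longest, reading from right to left among reduced columns of equal length. -/
def RColOrder (ν δ : List ℕ) (j : ℕ → ℕ) : Prop :=
  (∀ i, i < ν.sum → 1 ≤ j i ∧ j i ≤ ν.sum) ∧
  (∀ i i', i < ν.sum → i' < ν.sum → j i = j i' → i = i') ∧
  (∀ i i', i < i' → i' < ν.sum →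
    rcolN ν δ (j i) < rcolN ν δ (j i') ∨ (rcolN ν δ (j i) = rcolN ν δ (j i') ∧ j i' < j i))

/-- The entry `←ν_i` of the reversed path of `ν`: the number of north steps of
`ν` in column `m − i`. -/
def revNu (ν : List ℕ) (i : ℕ) : ℕ :=
  ((Finset.Ico 1 ν.length).filter (fun t => (ν.take t).sum + i = ν.sum)).card

def psum (Q : List ℕ) (j : ℕ) : ℕ := ∑ t ∈ Finset.range j, Q.getD t 0

lemma take_sum_eq (Q : List ℕ) (j : ℕ) : (Q.take j).sum = psum Q j := by
  induction Q generalizing j with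
  | nil => simp [psum]
  | cons a l ih =>
    cases j with
    | zero => simp [psum]
    | succ j =>
      simp [psum, Finset.sum_range_succ', List.take_succ_cons, ih j]
      exact Nat.add_comm _ _

lemma psum_len (Q : List ℕ) {j : ℕ} (h : Q.length ≤ j) : psum Q j = Q.sum := by
  rw [← take_sum_eq, List.take_of_length_le h]

lemma psum_succ (Q : List ℕ) (t : ℕ) : psum Q (t + 1) = psum Q t + Q.getD t 0 :=
  Finset.sum_range_succ _ _

lemma getD_set_self (l : List ℕ) (n v : ℕ) (h : n < l.length) : (l.set n v).getD n 0 = v := by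
  simp [List.getD_eq_getElem?_getD, List.getElem?_set, h]

lemma getD_set_other (l : List ℕ) (n m v : ℕ) (h : n ≠ m) : (l.set n v).getD m 0 = l.getD m 0 := by
  simp [List.getD_eq_getElem?_getD, List.getElem?_set, h]

lemma eq_of_psum {P Q : List ℕ} (hlen : P.length = Q.length) (h : ∀ j, psum P j = psum Q j) :
    P = Q := by
  apply List.ext_getElem hlen
  intro t h1 h2
  have e1 := psum_succ P t
  have e2 := psum_succ Q t
  rw [← List.getD_eq_getElem P 0 h1, ← List.getD_eq_getElem Q 0 h2]
  have := h t; have := h (t+1); omega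

lemma ico_psum (Q : List ℕ) {a b : ℕ} (hab : a ≤ b) :
    psum Q a + ∑ t ∈ Finset.Ico a b, Q.getD t 0 = psum Q b := by
  unfold psum
  rw [Finset.range_eq_Ico, Finset.range_eq_Ico]
  exact Finset.sum_Ico_consecutive (fun t => Q.getD t 0) (Nat.zero_le a) hab

lemma setset_psum (Q : List ℕ) (a b : ℕ) (hab : a < b) (hb : b < Q.length)
    (ha1 : 1 ≤ Q.getD a 0) : ∀ j,
    psum ((Q.set a (Q.getD a 0 - 1)).set b (Q.getD b 0 + 1)) j + (if a < j then 1 else 0)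
      = psum Q j + (if b < j then 1 else 0) := by
  intro j
  have hpt : ∀ t, ((Q.set a (Q.getD a 0 - 1)).set b (Q.getD b 0 + 1)).getD t 0
      + (if t = a then 1 else 0) = Q.getD t 0 + (if t = b then 1 else 0) := by
    intro t
    by_cases htb : t = b
    · rw [htb, getD_set_self _ _ _ (by simpa using hb)]
      simp [htb ▸ (by omega : ¬ t = a)]
    · rw [getD_set_other _ _ _ _ (Ne.symm htb)]
      by_cases hta : t = a
      · rw [hta, getD_set_self _ _ _ (by omega)]
        rw [if_pos rfl, if_neg (show ¬ a = b by omega)]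
        omega
      · rw [getD_set_other _ _ _ _ (Ne.symm hta)]
        simp [hta, htb]
  have hsum : ∀ c : ℕ, (∑ t ∈ Finset.range j, (if t = c then (1:ℕ) else 0))
      = if c < j then 1 else 0 := by
    intro c
    rw [Finset.sum_ite_eq' (Finset.range j) c (fun _ => (1:ℕ))]
    simp
  calc psum _ j + (if a < j then 1 else 0)
      = ∑ t ∈ Finset.range j, (((Q.set a (Q.getD a 0 - 1)).set b (Q.getD b 0 + 1)).getD t 0
          + (if t = a then 1 else 0)) := by
        rw [Finset.sum_add_distrib, hsum a]; rfl
    _ = ∑ t ∈ Finset.range j, (Q.getD t 0 + (if t = b then 1 else 0)) := by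
        exact Finset.sum_congr rfl (fun t _ => hpt t)
    _ = psum Q j + (if b < j then 1 else 0) := by
        rw [Finset.sum_add_distrib, hsum b]; rfl

lemma drot_parts {δ Q Y : List ℕ} {a : ℕ} (h : IsDeltaRotation δ Q Y a) :
    ∃ b, a < b ∧ b < Q.length ∧ 1 ≤ Q.getD a 0 ∧
      ((∑ t ∈ Finset.Ico a b, δ.getD t 0) ≤ ∑ t ∈ Finset.Ico (a+1) (b+1), Q.getD t 0) ∧
      (∀ k', a < k' → k' < b →
        (∑ t ∈ Finset.Ico (a+1) (k'+1), Q.getD t 0) < ∑ t ∈ Finset.Ico a k', δ.getD t 0) ∧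
      Y = (Q.set a (Q.getD a 0 - 1)).set b (Q.getD b 0 + 1) ∧
      Y.length = Q.length ∧
      (∀ j, psum Y j + (if a < j then 1 else 0) = psum Q j + (if b < j then 1 else 0)) := by
  obtain ⟨h1, h2, b, hab, hbl, hle, hlt, hY⟩ := h
  refine ⟨b, hab, hbl, h2, hle, hlt, hY, by rw [hY]; simp, ?_⟩
  intro j
  rw [hY]
  exact setset_psum Q a b hab hbl h2 j

lemma drot_psum_le {δ Q Y : List ℕ} (h : DRot δ Q Y) : ∀ j, psum Y j ≤ psum Q j := by
  obtain ⟨a, h⟩ := h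
  obtain ⟨b, hab, _, _, _, _, _, _, heq⟩ := drot_parts h
  intro j; have := heq j; split_ifs at this <;> omega

lemma drot_length {δ Q Y : List ℕ} (h : DRot δ Q Y) : Y.length = Q.length := by
  obtain ⟨a, h⟩ := h
  obtain ⟨b, _, _, _, _, _, _, hlen, _⟩ := drot_parts h
  exact hlen

lemma drot_lt {δ Q Y : List ℕ} (h : DRot δ Q Y) : ∃ b, b < Q.length ∧ psum Y b < psum Q b := by
  obtain ⟨a, h⟩ := h
  obtain ⟨b, hab, hbl, _, _, _, _, _, heq⟩ := drot_parts h
  refine ⟨b, hbl, ?_⟩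
  have := heq b
  rw [if_pos hab, if_neg (lt_irrefl b)] at this
  omega

lemma drot_ne {δ Q Y : List ℕ} (h : DRot δ Q Y) : Q ≠ Y := by
  intro e
  obtain ⟨b, _, hlt⟩ := drot_lt h
  rw [e] at hlt
  omega

lemma altLE_psum_le {δ P R : List ℕ} (h : altLE δ P R) : ∀ j, psum R j ≤ psum P j := by
  induction h with
  | refl => exact fun j => le_rfl
  | tail _ hstep ih => exact fun j => le_trans (drot_psum_le hstep j) (ih j)

lemma altLE_length {δ P R : List ℕ} (h : altLE δ P R) : R.length = P.length := by
  induction h with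
  | refl => rfl
  | tail _ hstep ih => rw [drot_length hstep, ih]

lemma drot_W {δ Q Y : List ℕ} (h : DRot δ Q Y) {L : ℕ} (hL : Q.length ≤ L) :
    ∑ j ∈ Finset.range L, psum Y j < ∑ j ∈ Finset.range L, psum Q j := by
  obtain ⟨b, hbl, hlt⟩ := drot_lt h
  exact Finset.sum_lt_sum (fun j _ => drot_psum_le h j)
    ⟨b, Finset.mem_range.mpr (by omega), hlt⟩

lemma altLE_antisymm {δ P R : List ℕ} (h1 : altLE δ P R) (h2 : altLE δ R P) : P = R := by
  have key : ∀ {X Y : List ℕ}, altLE δ X Y → X = Y ∨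
      (∑ j ∈ Finset.range (X.length + 1), psum Y j) <
        ∑ j ∈ Finset.range (X.length + 1), psum X j := by
    intro X Y h
    induction h with
    | refl => exact Or.inl rfl
    | @tail b c hXb hbc ih =>
      right
      have hlen : b.length = X.length := altLE_length hXb
      have hstep := drot_W hbc (L := X.length + 1) (by omega)
      rcases ih with e | lt
      · rw [e] at hstep ⊢; exact hstep
      · exact lt_trans hstep lt
  rcases key h1 with e | lt1
  · exact e
  rcases key h2 with e | lt2
  · exact e.symm
  rw [altLE_length h1] at lt2
  omega

lemma drot_nupath {ν δ Q Y : List ℕ} (hQ : IsNuPath ν Q) (h : DRot δ Q Y) : IsNuPath ν Y := by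
  obtain ⟨hlen, htake, hsum⟩ := hQ
  have hl : Y.length = Q.length := drot_length h
  refine ⟨by rw [hl, hlen], ?_, ?_⟩
  · intro j
    rw [take_sum_eq]
    calc psum Y j ≤ psum Q j := drot_psum_le h j
      _ = (Q.take j).sum := (take_sum_eq Q j).symm
      _ ≤ (ν.take j).sum := htake j
  · obtain ⟨a, hsr⟩ := h
    obtain ⟨b, hab, hbl, _, _, _, _, _, heq⟩ := drot_parts hsr
    have e := heq Q.length
    rw [if_pos (by omega), if_pos (by omega)] at e
    have : Y.sum = psum Y Q.length := (psum_len Y (by omega)).symm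
    have hQs : Q.sum = psum Q Q.length := (psum_len Q le_rfl).symm
    omega

/-- Core rigidity step: any δ-rotation step inside the interval `[μ, μ']` of a
δ-rotation `μ → μ'` must be that rotation itself. -/
lemma step_rigid (δ μ μ' : List ℕ) (i k : ℕ)
    (hik : i < k) (hkl : k < μ.length) (hμi : 1 ≤ μ.getD i 0)
    (hble : (∑ t ∈ Finset.Ico i k, δ.getD t 0) ≤ ∑ t ∈ Finset.Ico (i+1) (k+1), μ.getD t 0)
    (hblt : ∀ k', i < k' → k' < k →
      (∑ t ∈ Finset.Ico (i+1) (k'+1), μ.getD t 0) < ∑ t ∈ Finset.Ico i k', δ.getD t 0)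
    (hμ'eq : μ' = (μ.set i (μ.getD i 0 - 1)).set k (μ.getD k 0 + 1))
    (Q Y : List ℕ) (hstep : DRot δ Q Y) (hch : altLE δ Y μ')
    (hlenQ : Q.length = μ.length)
    (hQle : ∀ j, psum Q j ≤ psum μ j)
    (hQeq : ∀ j, j ≤ i + 1 → psum Q j = psum μ j)
    (IH : Y.length = μ.length → (∀ j, psum Y j ≤ psum μ j) →
      (∀ j, j ≤ i + 1 → psum Y j = psum μ j) → Y = μ ∨ Y = μ') :
    Q = μ ∧ Y = μ' := by
  obtain ⟨a, hsr⟩ := hstep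
  obtain ⟨b, hab, hbl, hQa, hsle, hslt, hYeq, hlenYQ, heq⟩ := drot_parts hsr
  have base_eq : ∀ j, psum μ' j + (if i < j then 1 else 0)
      = psum μ j + (if k < j then 1 else 0) := by
    intro j; rw [hμ'eq]; exact setset_psum μ i k hik hkl hμi j
  have hμ'Y : ∀ j, psum μ' j ≤ psum Y j := altLE_psum_le hch
  have hYQ : ∀ j, psum Y j ≤ psum Q j := drot_psum_le ⟨a, hsr⟩
  have hS1 : i ≤ a ∧ a < k := by
    have e1 := heq (a+1)
    rw [if_pos (Nat.lt_succ_self a), if_neg (by omega)] at e1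
    have e2 := base_eq (a+1)
    have e3 := hμ'Y (a+1)
    have e4 := hQle (a+1)
    split_ifs at e2 <;> omega
  have hbk : b ≤ k := by
    have e1 := heq b
    rw [if_pos hab, if_neg (lt_irrefl b)] at e1
    have e2 := base_eq b
    have e3 := hμ'Y b
    have e4 := hQle b
    split_ifs at e2 <;> omega
  rcases eq_or_lt_of_le hS1.1 with hia | hia
  · -- the step starts at i; it must end at k and start from μ
    subst hia
    have hQk1 : psum Q (k+1) = psum μ (k+1) := by
      have e2 := base_eq (k+1)
      rw [if_pos (by omega), if_pos (by omega)] at e2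
      have e3 := hμ'Y (k+1)
      have e5 := hYQ (k+1)
      have e4 := hQle (k+1)
      omega
    have hQi1 := hQeq (i+1) le_rfl
    have hbk' : b = k := by
      rcases lt_trichotomy b k with h' | h' | h'
      · exfalso
        have hb1 := hblt b (by omega) h'
        have c1 := ico_psum Q (show i+1 ≤ b+1 by omega)
        have c2 := ico_psum μ (show i+1 ≤ b+1 by omega)
        have c3 := hQle (b+1)
        omega
      · exact h'
      · exfalso
        have hs1 := hslt k (by omega) h'
        have c1 := ico_psum Q (show i+1 ≤ k+1 by omega)
        have c2 := ico_psum μ (show i+1 ≤ k+1 by omega)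
        omega
    subst hbk'
    have hQμ : ∀ j, psum Q j = psum μ j := by
      intro j
      have e1 := heq j
      have e2 := base_eq j
      have e3 := hμ'Y j
      have e4 := hQle j
      have e5 := hYQ j
      split_ifs at e1 e2 <;> omega
    have hQμ' : Q = μ := eq_of_psum hlenQ hQμ
    refine ⟨hQμ', ?_⟩
    rw [hYeq, hQμ', ← hμ'eq]
  · -- the step starts strictly to the right of i: impossible
    exfalso
    have hYle : ∀ j, psum Y j ≤ psum μ j := fun j => le_trans (hYQ j) (hQle j)
    have hYeqμ : ∀ j, j ≤ i + 1 → psum Y j = psum μ j := by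
      intro j hj
      have e1 := heq j
      rw [if_neg (by omega), if_neg (by omega)] at e1
      have := hQeq j hj
      omega
    rcases IH (by rw [hlenYQ, hlenQ]) hYle hYeqμ with hYμ | hYμ'
    · have e1 := heq b
      rw [if_pos hab, if_neg (lt_irrefl b)] at e1
      have := hQle b
      rw [hYμ] at e1
      omega
    · have e1 := heq (i+1)
      rw [if_neg (by omega), if_neg (by omega)] at e1
      have e2 := base_eq (i+1)
      rw [if_pos (Nat.lt_succ_self i), if_neg (by omega)] at e2
      have e3 := hQeq (i+1) le_rfl
      rw [hYμ'] at e1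
      omega

lemma chain_rigid (δ μ μ' : List ℕ) (i k : ℕ)
    (hik : i < k) (hkl : k < μ.length) (hμi : 1 ≤ μ.getD i 0)
    (hble : (∑ t ∈ Finset.Ico i k, δ.getD t 0) ≤ ∑ t ∈ Finset.Ico (i+1) (k+1), μ.getD t 0)
    (hblt : ∀ k', i < k' → k' < k →
      (∑ t ∈ Finset.Ico (i+1) (k'+1), μ.getD t 0) < ∑ t ∈ Finset.Ico i k', δ.getD t 0)
    (hμ'eq : μ' = (μ.set i (μ.getD i 0 - 1)).set k (μ.getD k 0 + 1)) :
    ∀ Q, altLE δ Q μ' → Q.length = μ.length → (∀ j, psum Q j ≤ psum μ j) →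
      (∀ j, j ≤ i + 1 → psum Q j = psum μ j) → Q = μ ∨ Q = μ' := by
  intro Q h
  induction h using Relation.ReflTransGen.head_induction_on with
  | refl => exact fun _ _ _ => Or.inr rfl
  | @head Q Y hstep hch ih =>
    intro hlen hle heq
    exact Or.inl
      (step_rigid δ μ μ' i k hik hkl hμi hble hblt hμ'eq Q Y hstep hch hlen hle heq ih).1

/-- The covering relations of the alt ν-Tamari poset `T_ν(δ)`
are exactly the δ-rotations: for ν-paths `μ, μ'`, `μ` is covered by `μ'` in
`T_ν(δ)` if and only if `μ'` is the δ-rotation of `μ` at some valley of `μ`. -/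
theorem alt_tamari_covers_are_delta_rotations (ν δ : List ℕ) (hν : ν ≠ [])
    (hδ : IsIncrement ν δ) (μ μ' : List ℕ)
    (h1 : IsNuPath ν μ) (h2 : IsNuPath ν μ') :
    altCovBy ν δ μ μ' ↔ DRot δ μ μ' := by
  constructor
  · rintro ⟨-, -, hle, hne, hmin⟩
    rcases hle.cases_head with e | ⟨X, hstep, hchain⟩
    · exact absurd e hne
    rcases hmin X (drot_nupath h1 hstep) (Relation.ReflTransGen.single hstep) hchain with
      e | e
    · exact absurd e.symm (drot_ne hstep)
    · exact e ▸ hstep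
  · intro hD
    obtain ⟨i, hsr⟩ := hD
    obtain ⟨k, hik, hkl, hμi, hble, hblt, hμ'eq, hlenμ'μ, hbase⟩ := drot_parts hsr
    have hDR : DRot δ μ μ' := ⟨i, hsr⟩
    refine ⟨h1, h2, Relation.ReflTransGen.single hDR, drot_ne hDR, ?_⟩
    intro R hR hμR hRμ'
    rcases hμR.cases_head with e | ⟨X, hstep, hchain⟩
    · exact Or.inl e.symm
    · have hXμ' : altLE δ X μ' := hchain.trans hRμ'
      have hX : X = μ' := by
        refine (step_rigid δ μ μ' i k hik hkl hμi hble hblt hμ'eq μ X hstep hXμ' rfl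
          (fun j => le_rfl) (fun j _ => rfl) ?_).2
        exact chain_rigid δ μ μ' i k hik hkl hμi hble hblt hμ'eq X hXμ'
      subst hX
      exact Or.inr (altLE_antisymm hRμ' hchain)
end

section
/- Let ν be a lattice path and let δ, δ′ be increment vectors for ν with δ_i ≤ δ′_i for all 1 ≤ i ≤ n. Then for all ν-paths P, Q, if P < Q in the alt ν-Tamari poset T_ν(δ′), then P < Q in T_ν(δ). In other words, T_ν(δ) is an extension of T_ν(δ′). -/
/-!
Since `δ ≤ δ'`, the δ-altitude climbs more slowly than the δ'-altitude, so the δ-excursion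
starting at a valley returns to the level of the valley no later than the δ'-excursion does.
Hence a δ'-rotation, which carries the east step of the valley to the end of the
δ'-excursion, factors into δ-rotations: the east step first jumps to the end of the
δ-excursion, where it forms a new valley, and from there it jumps again, never overshooting
the end of the δ'-excursion.
-/

def moveEast (μ : List ℕ) (i k : ℕ) : List ℕ :=
  (μ.set i (μ.getD i 0 - 1)).set k (μ.getD k 0 + 1)

lemma length_moveEast (μ : List ℕ) (i k : ℕ) : (moveEast μ i k).length = μ.length := by
  simp [moveEast]

lemma getD_moveEast_of_ne (μ : List ℕ) {i k t : ℕ} (hi : t ≠ i) (hk : t ≠ k) :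
    (moveEast μ i k).getD t 0 = μ.getD t 0 := by
  simp [moveEast, List.getD, hi.symm, hk.symm]

lemma getD_moveEast_right (μ : List ℕ) (i : ℕ) {k : ℕ} (hk : k < μ.length) :
    (moveEast μ i k).getD k 0 = μ.getD k 0 + 1 := by
  simp [moveEast, List.getD, hk]

lemma moveEast_moveEast (μ : List ℕ) {i j k : ℕ} (hij : i ≠ j) (hjk : j ≠ k) (hik : i ≠ k) :
    moveEast (moveEast μ i j) j k = moveEast μ i k := by
  ext t a
  simp only [moveEast, List.getD, List.getElem?_set, List.length_set]
  split_ifs <;> grind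

lemma exists_isDeltaRotation (δ μ : List ℕ) {i k : ℕ} (hμi : 1 ≤ μ.getD i 0) (hik : i < k)
    (hk : k < μ.length)
    (hret : ∑ t ∈ Finset.Ico i k, δ.getD t 0 ≤ ∑ t ∈ Finset.Ico (i + 1) (k + 1), μ.getD t 0) :
    ∃ j, i < j ∧ j ≤ k ∧ IsDeltaRotation δ μ (moveEast μ i j) i := by
  classical
  have hex : ∃ j, i < j ∧ j ≤ k ∧
      ∑ t ∈ Finset.Ico i j, δ.getD t 0 ≤ ∑ t ∈ Finset.Ico (i + 1) (j + 1), μ.getD t 0 :=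
    ⟨k, hik, le_rfl, hret⟩
  obtain ⟨hij, hjk, hjret⟩ := Nat.find_spec hex
  refine ⟨Nat.find hex, hij, hjk, by omega, hμi, Nat.find hex, hij, by omega, hjret,
    fun m him hmj => lt_of_not_ge fun hm => Nat.find_min hex hmj ⟨him, by omega, hm⟩, rfl⟩

/-- `hret`: for each `m ∈ [j, k)`, the δ-altitude at the end of block `k` is at most that of
the lattice point preceding the `(m + 1)`-st north step. -/
lemma altLE_moveEast (δ μ : List ℕ) {j k : ℕ} (hμj : 1 ≤ μ.getD j 0) (hjk : j < k)
    (hk : k < μ.length)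
    (hret : ∀ m, j ≤ m → m < k →
      ∑ t ∈ Finset.Ico m k, δ.getD t 0 ≤ ∑ t ∈ Finset.Ico (m + 1) (k + 1), μ.getD t 0) :
    altLE δ μ (moveEast μ j k) := by
  induction hd : k - j using Nat.strong_induction_on generalizing μ j with
  | _ d ih =>
    obtain ⟨j₁, hjj₁, hj₁k, hrot⟩ := exists_isDeltaRotation δ μ hμj hjk hk (hret j le_rfl hjk)
    rcases hj₁k.eq_or_lt with rfl | hj₁k
    · exact .single ⟨j, hrot⟩
    have hμ₁ : 1 ≤ (moveEast μ j j₁).getD j₁ 0 := by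
      rw [getD_moveEast_right μ j (by omega)]; omega
    have hret₁ : ∀ m, j₁ ≤ m → m < k → ∑ t ∈ Finset.Ico m k, δ.getD t 0 ≤
        ∑ t ∈ Finset.Ico (m + 1) (k + 1), (moveEast μ j j₁).getD t 0 := by
      intro m hm hmk
      refine (hret m (by omega) hmk).trans_eq (Finset.sum_congr rfl fun t ht => ?_)
      rw [Finset.mem_Ico] at ht
      exact (getD_moveEast_of_ne μ (by omega) (by omega)).symm
    have hrest := ih (k - j₁) (by omega) (moveEast μ j j₁) hμ₁ hj₁k
      (by rw [length_moveEast]; exact hk) hret₁ rfl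
    rw [moveEast_moveEast μ (by omega) (by omega) (by omega)] at hrest
    exact .head ⟨j, hrot⟩ hrest

lemma IsDeltaRotation.altLE_of_le {δ δ' μ μ' : List ℕ} {i : ℕ}
    (hδ : ∀ t, δ.getD t 0 ≤ δ'.getD t 0) (h : IsDeltaRotation δ' μ μ' i) : altLE δ μ μ' := by
  obtain ⟨-, hμi, k, hik, hk, hret, hmin, rfl⟩ := h
  refine altLE_moveEast δ μ hμi hik hk fun m him hmk => ?_
  have hsplit_δ' : ∑ t ∈ Finset.Ico i m, δ'.getD t 0 + ∑ t ∈ Finset.Ico m k, δ'.getD t 0 =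
      ∑ t ∈ Finset.Ico i k, δ'.getD t 0 := Finset.sum_Ico_consecutive _ him hmk.le
  have hsplit_μ : ∑ t ∈ Finset.Ico (i + 1) (m + 1), μ.getD t 0 +
      ∑ t ∈ Finset.Ico (m + 1) (k + 1), μ.getD t 0 =
      ∑ t ∈ Finset.Ico (i + 1) (k + 1), μ.getD t 0 :=
    Finset.sum_Ico_consecutive _ (by omega) (by omega)
  have hδδ' : ∑ t ∈ Finset.Ico m k, δ.getD t 0 ≤ ∑ t ∈ Finset.Ico m k, δ'.getD t 0 :=
    Finset.sum_le_sum fun t _ => hδ t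
  rcases him.eq_or_lt with rfl | him
  · omega
  · -- the δ'-excursion has not yet returned at the end of block `m`
    have := hmin m him hmk
    omega

lemma altLE_antitone {δ δ' : List ℕ} (hδ : ∀ t, δ.getD t 0 ≤ δ'.getD t 0) :
    altLE δ' ≤ altLE δ :=
  Relation.reflTransGen_closed fun _ _ ⟨_, h⟩ => h.altLE_of_le hδ

theorem alt_tamari_extension_general (δ δ' : List ℕ)
    (hle : ∀ i, i < δ.length → δ.getD i 0 ≤ δ'.getD i 0)
    (P Q : List ℕ) (h : altLE δ' P Q) :
    altLE δ P Q := by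
  refine altLE_antitone (fun t => ?_) P Q h
  by_cases ht : t < δ.length
  · exact hle t ht
  · rw [List.getD_eq_default _ _ (not_lt.mp ht)]
    exact Nat.zero_le _

/-- If `δ_i ≤ δ'_i` for all `i`, then `T_ν(δ)` is an extension
of `T_ν(δ')`: for ν-paths `P, Q`, if `P < Q` in `T_ν(δ')` then `P < Q` in
`T_ν(δ)`. -/
theorem alt_tamari_extension (ν δ δ' : List ℕ) (hν : ν ≠ [])
    (hδ : IsIncrement ν δ) (hδ' : IsIncrement ν δ')
    (hle : ∀ i, i < δ.length → δ.getD i 0 ≤ δ'.getD i 0)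
    (P Q : List ℕ) (hP : IsNuPath ν P) (hQ : IsNuPath ν Q)
    (hne : P ≠ Q) (h : altLE δ' P Q) :
    altLE δ P Q :=
  alt_tamari_extension_general δ δ' hle P Q h
end

section
/- Let ν be a lattice path and δ an increment vector for ν. A subset T ⊆ L_{δ,ν} is a (δ,ν)-tree if and only if T is a ν̌-tree contained in L_{δ,ν}. In particular, every (δ,ν)-tree has exactly m + n + 1 elements. -/
/-!
Both kinds of trees are maximal compatible sets in a staircase: rows `0, …, n`, row `y` running
from column `l y` to column `u y`, with `l` antitone and `u` monotone (`l = 0` for `L_ν̌`, and `l`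
read off `ν̂` for `L_{δ,ν}`); compatibility only depends on `u`. Every maximal compatible set has
`n + 1 + (u n - l n)` points: its bottom row is an interval `[M, u 0]`, the columns `M + 1, …, u 0`
are empty higher up, and deleting the bottom row and these columns leaves a maximal compatible set
of a staircase with one row less. As `ν̂` ends at abscissa `0`, both regions give the same count,
so a (δ,ν)-tree cannot grow when it is extended to a ν̌-tree.
-/

/-- `ω`-incompatibility for a Ferrers diagram whose row `y` ends at column `u y`. -/
def StairIncomp (u : ℕ → ℕ) (p q : ℕ × ℕ) : Prop :=
  (p.1 < q.1 ∧ p.2 < q.2 ∧ q.1 ≤ u p.2) ∨ (q.1 < p.1 ∧ q.2 < p.2 ∧ p.1 ≤ u q.2)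

def StairCompat (u : ℕ → ℕ) (T : Set (ℕ × ℕ)) : Prop :=
  ∀ p ∈ T, ∀ q ∈ T, ¬ StairIncomp u p q

def stair (n : ℕ) (l u : ℕ → ℕ) : Set (ℕ × ℕ) :=
  {p | p.2 ≤ n ∧ l p.2 ≤ p.1 ∧ p.1 ≤ u p.2}

def IsStairTree (n : ℕ) (l u : ℕ → ℕ) (T : Set (ℕ × ℕ)) : Prop :=
  T ⊆ stair n l u ∧ StairCompat u T ∧
    ∀ T', T ⊆ T' → T' ⊆ stair n l u → StairCompat u T' → T' = T

section

variable {n : ℕ} {l u : ℕ → ℕ}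

lemma stair_finite : (stair n l u).Finite := by
  refine ((Set.finite_Iic ((Finset.range (n + 1)).sup u)).prod (Set.finite_Iic n)).subset ?_
  rintro ⟨x, y⟩ ⟨hy, -, hx⟩
  exact ⟨hx.trans (Finset.le_sup (by simpa [Nat.lt_succ_iff] using hy)), hy⟩

lemma stairCompat_stair_zero : StairCompat u (stair 0 l u) := by
  rintro p ⟨hp, -⟩ q ⟨hq, -⟩ (h | h) <;> omega

lemma exists_isStairTree_superset {C : Set (ℕ × ℕ)} (hC : C ⊆ stair n l u)
    (hc : StairCompat u C) : ∃ T, C ⊆ T ∧ IsStairTree n l u T := by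
  obtain ⟨T, hCT, hT⟩ := zorn_subset_nonempty {X | X ⊆ stair n l u ∧ StairCompat u X}
    (fun c hc hchain _ => ⟨⋃₀ c, ⟨Set.sUnion_subset fun X hX => (hc hX).1,
      fun p ⟨X, hX, hp⟩ q ⟨Y, hY, hq⟩ => (hchain.total hX hY).elim
        (fun h => (hc hY).2 p (h hp) q hq) (fun h => (hc hX).2 p hp q (h hq))⟩,
      fun _ => Set.subset_sUnion_of_mem⟩) C ⟨hC, hc⟩
  exact ⟨T, hCT, hT.prop.1, hT.prop.2,
    fun T' hTT' hT' hc' => (hT.eq_of_subset ⟨hT', hc'⟩ hTT').symm⟩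

end

/-- Inverse of deleting row `0` and the columns `M + 1, …, M + g`. -/
def expand (M g : ℕ) (p : ℕ × ℕ) : ℕ × ℕ := (if p.1 ≤ M then p.1 else p.1 + g, p.2 + 1)

section Expand

variable {n M g : ℕ} {l u : ℕ → ℕ}

lemma expand_injective : Function.Injective (expand M g) := by
  rintro ⟨x, y⟩ ⟨x', y'⟩ h
  simp only [expand, Prod.mk.injEq] at h ⊢
  split_ifs at h <;> omega

lemma mem_range_expand {p : ℕ × ℕ} :
    p ∈ Set.range (expand M g) ↔ 0 < p.2 ∧ (p.1 ≤ M ∨ M + g < p.1) := by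
  obtain ⟨x, y⟩ := p
  constructor
  · rintro ⟨⟨a, b⟩, h⟩
    simp only [expand, Prod.mk.injEq] at h
    split_ifs at h <;> omega
  · rintro ⟨hy, hx⟩
    refine ⟨(if x ≤ M then x else x - g, y - 1), ?_⟩
    simp only [expand, Prod.mk.injEq]
    split_ifs <;> omega

lemma stairIncomp_expand_iff (hu : Monotone u) (hMg : M + g ≤ u 0) (a b : ℕ × ℕ) :
    StairIncomp u (expand M g a) (expand M g b) ↔
      StairIncomp (fun y => u (y + 1) - g) a b := by
  have ha := hu (Nat.zero_le (a.2 + 1))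
  have hb := hu (Nat.zero_le (b.2 + 1))
  simp only [StairIncomp, expand]
  split_ifs <;> omega

lemma expand_mem_stair_iff (hl : Antitone l) (hu : Monotone u) (hlM : l 0 ≤ M)
    (hMg : M + g ≤ u 0) {a : ℕ × ℕ} :
    expand M g a ∈ stair (n + 1) l u ↔
      a ∈ stair n (fun y => l (y + 1)) (fun y => u (y + 1) - g) := by
  have hla := hl (Nat.zero_le (a.2 + 1))
  have hua := hu (Nat.zero_le (a.2 + 1))
  simp only [stair, expand, Set.mem_ofPred_eq]
  split_ifs <;> omega

lemma not_stairIncomp_expand {x : ℕ} (hMx : M ≤ x) (hMg : u 0 ≤ M + g) (a : ℕ × ℕ) :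
    ¬ StairIncomp u (x, 0) (expand M g a) ∧ ¬ StairIncomp u (expand M g a) (x, 0) := by
  simp only [StairIncomp, expand]
  split_ifs <;> omega

end Expand

namespace IsStairTree

variable {n : ℕ} {l u : ℕ → ℕ} {T : Set (ℕ × ℕ)}

lemma mem_of_compat (hT : IsStairTree n l u T) {p : ℕ × ℕ} (hp : p ∈ stair n l u)
    (hpT : ∀ q ∈ T, ¬ StairIncomp u p q ∧ ¬ StairIncomp u q p) : p ∈ T := by
  have hc : StairCompat u (insert p T) := by
    rintro a (rfl | ha) b (rfl | hb)
    · rintro (h | h) <;> omega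
    · exact (hpT b hb).1
    · exact (hpT a ha).2
    · exact hT.2.1 a ha b hb
  rw [← hT.2.2 _ (Set.subset_insert p T) (Set.insert_subset hp hT.1) hc]
  exact Set.mem_insert p T

lemma fst_le_or_lt (hT : IsStairTree n l u T) {M : ℕ} (hM : (M, 0) ∈ T) {p : ℕ × ℕ}
    (hp : p ∈ T) (hp2 : 0 < p.2) : p.1 ≤ M ∨ u 0 < p.1 := by
  by_contra! h
  exact hT.2.1 _ hM _ hp (Or.inl ⟨h.1, hp2, h.2⟩)

lemma mem_row_zero (hT : IsStairTree n l u T) {M x : ℕ} (hM : (M, 0) ∈ T) (hMx : M ≤ x)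
    (hx : x ≤ u 0) : (x, 0) ∈ T := by
  have hMreg := hT.1 hM
  refine hT.mem_of_compat ⟨Nat.zero_le n, hMreg.2.1.trans hMx, hx⟩ fun q hq => ?_
  rcases Nat.eq_zero_or_pos q.2 with hq2 | hq2
  · constructor <;> rintro (h | h) <;> simp only at h <;> omega
  · have := hT.fst_le_or_lt hM hq hq2
    constructor <;> rintro (h | h) <;> simp only at h <;> omega

/-- The columns `M + 1, …, u 0` are empty above row `0`, so deleting them and row `0` keeps the
tree maximal. -/
lemma preimage_expand (hT : IsStairTree (n + 1) l u T) (hl : Antitone l) (hu : Monotone u)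
    {M g : ℕ} (hM : (M, 0) ∈ T) (hMmin : ∀ x, (x, 0) ∈ T → M ≤ x) (hMg : M + g = u 0) :
    IsStairTree n (fun y => l (y + 1)) (fun y => u (y + 1) - g) (expand M g ⁻¹' T) := by
  have hlM : l 0 ≤ M := (hT.1 hM).2.1
  have hmem {a} := expand_mem_stair_iff (n := n) hl hu hlM hMg.le (a := a)
  have hinc := stairIncomp_expand_iff hu hMg.le
  refine ⟨fun a ha => hmem.mp (hT.1 ha), fun a ha b hb h => hT.2.1 _ ha _ hb ((hinc a b).mpr h),
    fun W hTW hW hWc => (Set.image_subset_iff.mp ?_).antisymm hTW⟩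
  let V := {p ∈ T | p.2 = 0} ∪ expand M g '' W
  have hTV : T ⊆ V := by
    intro p hp
    rcases Nat.eq_zero_or_pos p.2 with hp2 | hp2
    · exact Or.inl ⟨hp, hp2⟩
    · obtain ⟨a, rfl⟩ := mem_range_expand.mpr ⟨hp2, hMg ▸ hT.fst_le_or_lt hM hp hp2⟩
      exact Or.inr ⟨a, hTW hp, rfl⟩
  have hVc : StairCompat u V := by
    have hrow {p : ℕ × ℕ} (hp : p ∈ T) (hp2 : p.2 = 0) (a : ℕ × ℕ) :
        ¬ StairIncomp u p (expand M g a) ∧ ¬ StairIncomp u (expand M g a) p := by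
      obtain ⟨x, y⟩ := p
      obtain rfl : y = 0 := hp2
      exact not_stairIncomp_expand (hMmin x hp) hMg.ge a
    rintro _ (⟨hp, hp2⟩ | ⟨a, ha, rfl⟩) _ (⟨hq, hq2⟩ | ⟨b, hb, rfl⟩)
    · rintro (h | h) <;> omega
    · exact (hrow hp hp2 b).1
    · exact (hrow hq hq2 a).2
    · exact fun h => hWc a ha b hb ((hinc a b).mp h)
  have hV : V ⊆ stair (n + 1) l u := by
    rintro _ (⟨hp, -⟩ | ⟨a, ha, rfl⟩)
    · exact hT.1 hp
    · exact hmem.mpr (hW ha)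
  rw [← hT.2.2 V hTV hV hVc]
  exact Set.subset_union_right

lemma corner_mem (hT : IsStairTree n l u T) (hlu : l 0 ≤ u 0) : (u 0, 0) ∈ T :=
  hT.mem_of_compat ⟨Nat.zero_le n, hlu, le_rfl⟩ fun q _ => by
    constructor <;> rintro (h | h) <;> simp only at h <;> omega

lemma inter_row_zero_eq (hT : IsStairTree n l u T) {M : ℕ} (hM : (M, 0) ∈ T)
    (hMmin : ∀ x, (x, 0) ∈ T → M ≤ x) :
    T ∩ {p | p.2 = 0} = (fun x => (x, 0)) '' Set.Icc M (u 0) := by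
  ext ⟨x, y⟩
  constructor
  · rintro ⟨hx, rfl : y = 0⟩
    exact ⟨x, ⟨hMmin x hx, (hT.1 hx).2.2⟩, rfl⟩
  · rintro ⟨x, ⟨hMx, hx⟩, h⟩
    obtain ⟨rfl, rfl⟩ := Prod.mk.inj h
    exact ⟨hT.mem_row_zero hM hMx hx, rfl⟩

theorem ncard_eq (hT : IsStairTree n l u T) (hl : Antitone l) (hu : Monotone u)
    (hlu : l 0 ≤ u 0) : T.ncard = n + 1 + (u n - l n) := by
  induction n generalizing l u T with
  | zero =>
    have hrow : stair 0 l u = (fun x => (x, 0)) '' Set.Icc (l 0) (u 0) := by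
      ext ⟨x, y⟩
      simp only [stair, Set.mem_ofPred_eq, Set.mem_image, Set.mem_Icc, Prod.mk.injEq]
      constructor
      · rintro ⟨hy, h⟩
        obtain rfl : y = 0 := Nat.le_zero.mp hy
        exact ⟨x, h, rfl, rfl⟩
      · rintro ⟨x, h, rfl, rfl⟩
        exact ⟨le_rfl, h⟩
    rw [← hT.2.2 _ hT.1 subset_rfl stairCompat_stair_zero, hrow,
      Set.ncard_image_of_injective _ (fun a b h => (Prod.mk.inj h).1), Set.ncard_Icc_nat]
    omega
  | succ n ih =>
    classical
    have hex : ∃ x, (x, 0) ∈ T := ⟨u 0, hT.corner_mem hlu⟩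
    obtain ⟨M, hM, hMmin⟩ : ∃ M, (M, 0) ∈ T ∧ ∀ x, (x, 0) ∈ T → M ≤ x :=
      ⟨Nat.find hex, Nat.find_spec hex, fun x hx => Nat.find_min' hex hx⟩
    obtain ⟨-, hlM, hMu⟩ : _ ∧ l 0 ≤ M ∧ M ≤ u 0 := hT.1 hM
    have hMg : M + (u 0 - M) = u 0 := Nat.add_sub_cancel' hMu
    have hT' := hT.preimage_expand hl hu hM hMmin hMg
    have hl1 := hl (Nat.zero_le 1)
    have hu1 := hu (Nat.zero_le 1)
    have hcard' := ih hT' (fun a b h => hl (Nat.succ_le_succ h))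
      (fun a b h => Nat.sub_le_sub_right (hu (Nat.succ_le_succ h)) _)
      (show l 1 ≤ u 1 - (u 0 - M) by omega)
    have hupper : T \ {p | p.2 = 0} = expand M (u 0 - M) '' (expand M (u 0 - M) ⁻¹' T) := by
      rw [Set.image_preimage_eq_inter_range]
      ext p
      refine ⟨fun ⟨hp, hp2⟩ => ⟨hp, ?_⟩, fun ⟨hp, hp2⟩ => ⟨hp, (mem_range_expand.mp hp2).1.ne'⟩⟩
      have hp2 : 0 < p.2 := Nat.pos_of_ne_zero hp2
      exact mem_range_expand.mpr ⟨hp2, hMg.symm ▸ hT.fst_le_or_lt hM hp hp2⟩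
    rw [← Set.ncard_inter_add_ncard_sdiff_eq_ncard T {p | p.2 = 0}
        (stair_finite.subset hT.1), hT.inter_row_zero_eq hM hMmin, hupper,
      Set.ncard_image_of_injective _ (fun a b h => (Prod.mk.inj h).1), Set.ncard_Icc_nat,
      Set.ncard_image_of_injective _ expand_injective, hcard']
    have hln := hl (Nat.zero_le (n + 1))
    have hun := hu (Nat.zero_le (n + 1))
    omega

end IsStairTree

section Compare

variable {n : ℕ} {l l' u : ℕ → ℕ} {T : Set (ℕ × ℕ)}

lemma stair_subset_stair (hle : ∀ y, l' y ≤ l y) : stair n l u ⊆ stair n l' u :=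
  fun _ ⟨hy, hl, hu⟩ => ⟨hy, (hle _).trans hl, hu⟩

/-- Stair trees have the same size in both regions when `l' n = l n`, so a stair tree of the
smaller region, extended to one of the larger region, cannot grow. -/
theorem isStairTree_iff_of_le (hl : Antitone l) (hl' : Antitone l') (hu : Monotone u)
    (hlu : l 0 ≤ u 0) (hle : ∀ y, l' y ≤ l y) (hn : l' n = l n) :
    IsStairTree n l u T ↔ IsStairTree n l' u T ∧ T ⊆ stair n l u := by
  have hsub : stair n l u ⊆ stair n l' u := stair_subset_stair hle
  constructor
  · intro hT
    obtain ⟨T', hTT', hT'⟩ := exists_isStairTree_superset (hT.1.trans hsub) hT.2.1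
    have hcard : T'.ncard ≤ T.ncard := by
      rw [hT.ncard_eq hl hu hlu, hT'.ncard_eq hl' hu ((hle 0).trans hlu), hn]
    obtain rfl : T = T' := Set.eq_of_subset_of_ncard_le hTT' hcard (stair_finite.subset hT'.1)
    exact ⟨hT', hT.1⟩
  · rintro ⟨hT, hTl⟩
    exact ⟨hTl, hT.2.1, fun T' hTT' hT' hc => hT.2.2 T' hTT' (hT'.trans hsub) hc⟩

end Compare

/-- The right end of row `y` of the Ferrers diagram `F_ω`. -/
def rowEnd (ω : List ℕ) (y : ℕ) : ℕ := (ω.take (y + 1)).sum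

section Ferrers

variable {ω : List ℕ} {n : ℕ} {l : ℕ → ℕ} {T : Set (ℕ × ℕ)}

lemma monotone_rowEnd : Monotone (rowEnd ω) :=
  fun _ _ h => List.monotone_sum_take ω (Nat.succ_le_succ h)

lemma lpts_eq_stair (hω : ω.length = n + 1) : Lpts ω = stair n (fun _ => 0) (rowEnd ω) := by
  ext p
  simp only [Lpts, stair, rowEnd, Set.mem_ofPred_eq]
  omega

lemma incomp_iff_stairIncomp {p q : ℕ × ℕ} (hp : p.2 < ω.length) (hq : q.2 < ω.length) :
    Incomp ω p q ↔ StairIncomp (rowEnd ω) p q := by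
  obtain ⟨x, y⟩ := p
  obtain ⟨x', y'⟩ := q
  simp only [Incomp, StairIncomp, Lpts, rowEnd, Set.mem_ofPred_eq, max_def, min_def] at hp hq ⊢
  split_ifs <;> omega

lemma maximal_iff_isStairTree {S : Set (ℕ × ℕ)} (hω : ω.length = n + 1)
    (hS : S = stair n l (rowEnd ω)) :
    (T ⊆ S ∧ PairwiseCompat ω T ∧
      ∀ T', T ⊆ T' → T' ⊆ S → PairwiseCompat ω T' → T' = T) ↔
      IsStairTree n l (rowEnd ω) T := by
  subst hS
  have hcompat {T : Set (ℕ × ℕ)} (hT : T ⊆ stair n l (rowEnd ω)) :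
      PairwiseCompat ω T ↔ StairCompat (rowEnd ω) T :=
    forall₂_congr fun p hp => forall₂_congr fun q hq => not_congr <|
      incomp_iff_stairIncomp (by have := (hT hp).1; omega) (by have := (hT hq).1; omega)
  exact and_congr_right fun hT => and_congr (hcompat hT) <|
    forall₂_congr fun T' _ => forall_congr' fun hT' => imp_congr_left (hcompat hT')

end Ferrers

/-- The left end of row `y` of `L_{δ,ν}`, where `ν̂` leaves height `y`. -/
def dnRowStart (ν δ : List ℕ) (y : ℕ) : ℕ := ν.sum - ((ν.take (y + 1)).sum + (δ.drop y).sum)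

section Increment

variable {ν δ : List ℕ}

lemma sum_take_add_one_eq (xs : List ℕ) (k : ℕ) :
    (xs.take (k + 1)).sum = (xs.take k).sum + xs.getD k 0 := by
  simp only [List.take_add_one, List.sum_append, List.getD_eq_getElem?_getD]
  cases xs[k]? <;> simp

/-- Passing from row `y` to row `y + 1` adds `ν_{y+1}` and removes `δ_{y+1} ≤ ν_{y+1}`. -/
lemma IsIncrement.monotone_sum_take_add_sum_drop (hδ : IsIncrement ν δ) :
    Monotone fun y => (ν.take (y + 1)).sum + (δ.drop y).sum := by
  refine monotone_nat_of_le_succ fun y => ?_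
  have hle : δ.getD y 0 ≤ ν.getD (y + 1) 0 := by
    rcases lt_or_ge y δ.length with hy | hy
    · exact hδ.2 y hy
    · rw [List.getD_eq_default _ _ hy]
      exact Nat.zero_le _
  have hν := sum_take_add_one_eq ν (y + 1)
  have hδy := sum_take_add_one_eq δ y
  have hδsum := List.sum_take_add_sum_drop δ y
  have hδsum' := List.sum_take_add_sum_drop δ (y + 1)
  omega

lemma IsIncrement.antitone_dnRowStart (hδ : IsIncrement ν δ) : Antitone (dnRowStart ν δ) :=
  fun _ _ h => Nat.sub_le_sub_left (hδ.monotone_sum_take_add_sum_drop h) _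

lemma IsIncrement.sum_le_sum (hδ : IsIncrement ν δ) : δ.sum ≤ ν.sum := by
  have h := hδ.monotone_sum_take_add_sum_drop (Nat.zero_le δ.length)
  simp only [List.drop_zero, List.take_of_length_le (show ν.length ≤ δ.length + 1 by
    rw [hδ.1]), List.drop_length, List.sum_nil] at h
  omega

lemma IsIncrement.dnRowStart_length (hδ : IsIncrement ν δ) : dnRowStart ν δ δ.length = 0 := by
  simp [dnRowStart, List.take_of_length_le (show ν.length ≤ δ.length + 1 by rw [hδ.1])]

lemma IsIncrement.rowEnd_nuCheck_length (hδ : IsIncrement ν δ) :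
    rowEnd (nuCheck ν δ) δ.length = ν.sum := by
  simp only [rowEnd, nuCheck, List.take_succ_cons, List.sum_cons, List.take_length]
  have := hδ.sum_le_sum
  omega

lemma dnRowStart_zero_le_rowEnd : dnRowStart ν δ 0 ≤ rowEnd (nuCheck ν δ) 0 := by
  simp only [dnRowStart, rowEnd, nuCheck, List.take_succ_cons, List.take_zero, List.sum_cons,
    List.sum_nil, List.drop_zero]
  omega

lemma IsIncrement.ldn_eq_stair (hδ : IsIncrement ν δ) :
    Ldn ν δ = stair δ.length (dnRowStart ν δ) (rowEnd (nuCheck ν δ)) := by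
  ext p
  simp only [Ldn, stair, dnRowStart, rowEnd, Set.mem_ofPred_eq]
  have := hδ.1
  omega

end Increment

theorem dn_tree_iff_check_tree_general (ν δ : List ℕ) (hδ : IsIncrement ν δ) :
    (∀ T : Set (ℕ × ℕ), IsDNTree ν δ T ↔ (IsTree (nuCheck ν δ) T ∧ T ⊆ Ldn ν δ)) ∧
    (∀ T : Set (ℕ × ℕ), IsDNTree ν δ T → T.ncard = ν.sum + ν.length) := by
  have hlen : (nuCheck ν δ).length = δ.length + 1 := List.length_cons
  have hDN (T) := maximal_iff_isStairTree (T := T) hlen hδ.ldn_eq_stair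
  have hTree (T) := maximal_iff_isStairTree (T := T) hlen (lpts_eq_stair hlen)
  refine ⟨fun T => ?_, fun T hT => ?_⟩
  · rw [IsDNTree, hDN, IsTree, hTree, hδ.ldn_eq_stair]
    exact isStairTree_iff_of_le hδ.antitone_dnRowStart antitone_const monotone_rowEnd
      dnRowStart_zero_le_rowEnd (fun _ => Nat.zero_le _) hδ.dnRowStart_length.symm
  · rw [((hDN T).mp hT).ncard_eq hδ.antitone_dnRowStart monotone_rowEnd
      dnRowStart_zero_le_rowEnd, hδ.dnRowStart_length, hδ.rowEnd_nuCheck_length, ← hδ.1]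
    omega

/-- A subset `T ⊆ L_{δ,ν}` is a (δ,ν)-tree if and only if it
is a ν̌-tree contained in `L_{δ,ν}`.  In particular, every (δ,ν)-tree has
exactly `m + n + 1` elements (here `m + n + 1 = ν.sum + ν.length`). -/
theorem dn_tree_iff_check_tree (ν δ : List ℕ) (hν : ν ≠ []) (hδ : IsIncrement ν δ) :
    (∀ T : Set (ℕ × ℕ), IsDNTree ν δ T ↔ (IsTree (nuCheck ν δ) T ∧ T ⊆ Ldn ν δ)) ∧
    (∀ T : Set (ℕ × ℕ), IsDNTree ν δ T → T.ncard = ν.sum + ν.length) :=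
  dn_tree_iff_check_tree_general ν δ hδ
end

section
/- Let ν be a lattice path and δ an increment vector for ν. For every ν-path μ = (μ_0, …, μ_n) there is a unique (δ,ν)-tree flush_{δ,ν}(μ) having exactly μ_i + 1 points at height i for each 0 ≤ i ≤ n, and the map flush_{δ,ν} is a bijection from the set of ν-paths to the set of (δ,ν)-trees. Moreover, two ν-paths μ, μ′ are related by a δ-rotation if and only if the trees flush_{δ,ν}(μ), flush_{δ,ν}(μ′) are related by a ν̌-rotation. -/
/-!
Write `F_{δ,ν}` row by row: row `y` is an interval `[lo y, hi y]` of positions, and a point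
`(a, b)` of a lower row is incompatible with exactly the positions `x` of row `y` with
`a < x ≤ hi b`. In a tree, every row is a nonempty final segment of the positions left
available by the rows below it, and the top row takes all of them. So a tree is determined by
its row counts, and the number of positions available in row `z` is `hi z - lo z + z + 1`
minus the number of points in the rows below. With this count, the ν-path inequalities are
exactly the conditions under which the right flushing succeeds. The count also shows that all
trees have the same size, so a noncrossing set of that size is a tree.

A ν̌-rotation at `(m, i)` removes the leftmost point of row `i` and adds a point to row `k`,
where `(m, k)` is the next point of the tree above `(m, i)`. Following, up that column, the
number of available positions to the right of `m` shows that `k` is where the δ-altitude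
returns to its value at the valley. So the rotation moves one east step from block `i` to
block `k`, as a δ-rotation does.
-/

namespace Finset

variable {α : Type*} [LinearOrder α] {A U : Finset α} {u x z : α} {c : ℕ}

def numGT (A : Finset α) (x : α) : ℕ := #(A.filter (x < ·))

def topN (A : Finset α) (c : ℕ) : Finset α := A.filter (fun x => A.numGT x < c)

lemma numGT_lt_numGT (hz : z ∈ A) (h : x < z) : A.numGT z < A.numGT x := by
  refine card_lt_card ⟨fun w hw => ?_, fun hsub => by simpa using hsub (mem_filter.2 ⟨hz, h⟩)⟩
  exact mem_filter.2 ⟨(mem_filter.1 hw).1, h.trans (mem_filter.1 hw).2⟩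

lemma numGT_antitone : Antitone A.numGT :=
  fun _ _ h => card_le_card fun _ hw =>
    mem_filter.2 ⟨(mem_filter.1 hw).1, h.trans_lt (mem_filter.1 hw).2⟩

lemma numGT_lt_card (hx : x ∈ A) : A.numGT x < #A :=
  card_lt_card ⟨filter_subset _ _, fun hsub => by simpa using hsub hx⟩

lemma numGT_injOn : Set.InjOn A.numGT A := by
  intro x hx z hz h
  rcases lt_trichotomy x z with hxz | rfl | hzx
  · exact absurd h (numGT_lt_numGT hz hxz).ne'
  · rfl
  · exact absurd h (numGT_lt_numGT hx hzx).ne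

lemma image_numGT (A : Finset α) : A.image A.numGT = range #A :=
  eq_of_subset_of_card_le
    (image_subset_iff.2 fun _ hx => mem_range.2 (numGT_lt_card hx))
    (by rw [card_range, card_image_of_injOn numGT_injOn])

lemma topN_subset (A : Finset α) (c : ℕ) : A.topN c ⊆ A := filter_subset _ _

lemma mem_topN (hx : x ∈ A) : x ∈ A.topN c ↔ A.numGT x < c := by
  simp [topN, hx]

lemma card_topN (A : Finset α) (c : ℕ) : #(A.topN c) = min c #A := by
  have : (A.topN c).image A.numGT = range (min c #A) := by
    ext r
    simp only [mem_image, mem_range, lt_min_iff]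
    constructor
    · rintro ⟨x, hx, rfl⟩
      exact ⟨(mem_filter.1 hx).2, numGT_lt_card (topN_subset A c hx)⟩
    · rintro ⟨hrc, hrA⟩
      obtain ⟨x, hx, rfl⟩ := mem_image.1 (image_numGT A ▸ mem_range.2 hrA)
      exact ⟨x, (mem_topN hx).2 hrc, rfl⟩
  rw [← card_range (min c #A), ← this,
    card_image_of_injOn (numGT_injOn.mono (coe_subset.2 (topN_subset A c)))]

lemma mem_topN_of_le (hx : x ∈ A.topN c) (hz : z ∈ A) (hxz : x ≤ z) : z ∈ A.topN c :=
  (mem_topN hz).2 ((numGT_antitone hxz).trans_lt ((mem_topN (topN_subset A c hx)).1 hx))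

lemma exists_two_smallest (h : 1 < #A) :
    ∃ a ∈ A, ∃ b ∈ A, a < b ∧ (∀ x ∈ A, a ≤ x) ∧ ∀ x ∈ A, x ≠ a → b ≤ x := by
  have hA : A.Nonempty := card_pos.1 (by omega)
  have hA' : (A.erase (A.min' hA)).Nonempty := by
    rw [← card_pos, card_erase_of_mem (A.min'_mem hA)]
    omega
  obtain ⟨hb, hba⟩ := mem_erase.1 ((A.erase (A.min' hA)).min'_mem hA')
  exact ⟨_, A.min'_mem hA, _, hba, lt_of_le_of_ne (A.min'_le _ hba) (Ne.symm hb),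
    fun x hx => A.min'_le x hx, fun x hx hxa => min'_le _ _ (mem_erase.2 ⟨hxa, hx⟩)⟩

section UpwardClosed

variable (hUA : U ⊆ A) (hup : ∀ u ∈ U, ∀ x ∈ A, u ≤ x → x ∈ U)
include hUA hup

lemma filter_lt_eq_erase (hu : u ∈ U) (hmin : ∀ w ∈ U, u ≤ w) :
    A.filter (u < ·) = U.erase u := by
  ext z
  simp only [mem_filter, mem_erase]
  exact ⟨fun ⟨hz, h⟩ => ⟨h.ne', hup u hu z hz h.le⟩,
    fun ⟨hne, hz⟩ => ⟨hUA hz, lt_of_le_of_ne (hmin z hz) hne.symm⟩⟩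

lemma numGT_add_one_of_isLeast (hu : u ∈ U) (hmin : ∀ w ∈ U, u ≤ w) :
    A.numGT u + 1 = #U := by
  rw [numGT, filter_lt_eq_erase hUA hup hu hmin, card_erase_add_one hu]

lemma eq_topN_card : U = A.topN #U := by
  ext x
  constructor
  · intro hx
    refine (mem_topN (hUA hx)).2 (lt_of_le_of_lt (card_le_card fun z hz => ?_)
      (card_erase_lt_of_mem hx))
    obtain ⟨hzA, hxz⟩ := mem_filter.1 hz
    exact mem_erase.2 ⟨hxz.ne', hup x hx z hzA hxz.le⟩
  · intro hx
    by_contra hxU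
    refine absurd ((mem_topN (topN_subset A _ hx)).1 hx)
      (not_lt.2 (card_le_card fun u hu => ?_))
    refine mem_filter.2 ⟨hUA hu, lt_of_not_ge fun hux => hxU ?_⟩
    exact hup u hu x (topN_subset A _ hx) hux

end UpwardClosed

end Finset

structure Staircase where
  top : ℕ
  lo : ℕ → ℕ
  hi : ℕ → ℕ
  lo_anti : Antitone lo
  hi_mono : Monotone hi
  lo_le_hi : ∀ y, lo y ≤ hi y

namespace Staircase

open Finset

variable (Λ : Staircase)

def pts : Set (ℕ × ℕ) := {p | p.2 ≤ Λ.top ∧ Λ.lo p.2 ≤ p.1 ∧ p.1 ≤ Λ.hi p.2}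

/-- Compatibility in `F_{δ,ν}` is tested inside the larger diagram `F_ν̌`, so only the right
boundary `hi` enters. -/
def Crossing (p q : ℕ × ℕ) : Prop := p.1 < q.1 ∧ p.2 < q.2 ∧ q.1 ≤ Λ.hi p.2

def NonCrossing (T : Set (ℕ × ℕ)) : Prop := ∀ p ∈ T, ∀ q ∈ T, ¬ Λ.Crossing p q

def IsTree (T : Set (ℕ × ℕ)) : Prop :=
  T ⊆ Λ.pts ∧ Λ.NonCrossing T ∧ ∀ T', T ⊆ T' → T' ⊆ Λ.pts → Λ.NonCrossing T' → T' = T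

def avail (R : ℕ → Finset ℕ) (y : ℕ) : Finset ℕ :=
  (Icc (Λ.lo y) (Λ.hi y)).filter fun x => ∀ b < y, ∀ a ∈ R b, ¬(a < x ∧ x ≤ Λ.hi b)

structure IsFlushedRow (R : ℕ → Finset ℕ) (y : ℕ) : Prop where
  subset : R y ⊆ Λ.avail R y
  nonempty : (R y).Nonempty
  upward : ∀ u ∈ R y, ∀ x ∈ Λ.avail R y, u ≤ x → x ∈ R y

variable {Λ} {R R' : ℕ → Finset ℕ} {x y z : ℕ}

lemma mem_avail : x ∈ Λ.avail R y ↔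
    (Λ.lo y ≤ x ∧ x ≤ Λ.hi y) ∧ ∀ b < y, ∀ a ∈ R b, ¬(a < x ∧ x ≤ Λ.hi b) := by
  simp [avail]

lemma avail_congr (h : ∀ b < y, R b = R' b) : Λ.avail R y = Λ.avail R' y := by
  ext x
  simp +contextual only [mem_avail, h]

lemma avail_zero : Λ.avail R 0 = Icc (Λ.lo 0) (Λ.hi 0) := by
  ext x
  simp [mem_avail]

lemma lt_of_notMem_row (h : Λ.IsFlushedRow R y) (hx : x ∈ Λ.avail R y) (hxR : x ∉ R y) :
    ∀ w ∈ R y, x < w :=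
  fun w hw => lt_of_not_ge fun hwx => hxR (h.upward w hw x hx hwx)

lemma mem_row_iff_numGT_lt (h : Λ.IsFlushedRow R y) (hx : x ∈ Λ.avail R y) :
    x ∈ R y ↔ (Λ.avail R y).numGT x < #(R y) := by
  conv_lhs => rw [eq_topN_card h.subset h.upward]
  exact mem_topN hx

lemma filter_le_row_eq (h : Λ.IsFlushedRow R y) :
    (Λ.avail R y).filter (fun x => ∀ w ∈ R y, x ≤ w) =
      Λ.avail R y \ (R y).erase ((R y).min' h.nonempty) := by
  have hmR := (R y).min'_mem h.nonempty
  ext x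
  simp only [mem_filter, mem_sdiff, mem_erase]
  constructor
  · rintro ⟨hx, hle⟩
    exact ⟨hx, fun ⟨hne, hxR⟩ => hne (le_antisymm (hle _ hmR) ((R y).min'_le x hxR))⟩
  · rintro ⟨hx, hnot⟩
    refine ⟨hx, fun w hw => ?_⟩
    by_contra! hwx
    have hxR := h.upward w hw x hx hwx.le
    exact hnot ⟨fun hxm => (hxm ▸ hwx).not_ge ((R y).min'_le w hw), hxR⟩

lemma avail_succ (hR : ∀ b ≤ y, Λ.IsFlushedRow R b) :
    Λ.avail R (y + 1) = Ico (Λ.lo (y + 1)) (Λ.lo y) ∪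
      (Λ.avail R y).filter (fun x => ∀ w ∈ R y, x ≤ w) ∪ Ioc (Λ.hi y) (Λ.hi (y + 1)) := by
  have hlo := Λ.lo_anti (Nat.le_add_right y 1)
  have hhi := Λ.hi_mono (Nat.le_add_right y 1)
  have hloy := Λ.lo_le_hi y
  have hlo_row : ∀ b ≤ y, ∀ a ∈ R b, Λ.lo y ≤ a := fun b hb a ha =>
    (Λ.lo_anti hb).trans (mem_avail.1 ((hR b hb).subset ha)).1.1
  ext x
  simp only [mem_union, mem_Ico, mem_Ioc, mem_filter, mem_avail]
  constructor
  · rintro ⟨⟨hx1, hx2⟩, hbl⟩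
    by_cases hxlo : x < Λ.lo y
    · exact Or.inl (Or.inl ⟨hx1, hxlo⟩)
    by_cases hxhi : Λ.hi y < x
    · exact Or.inr ⟨hxhi, hx2⟩
    refine Or.inl (Or.inr ⟨⟨⟨by omega, by omega⟩, fun b hb => hbl b (by omega)⟩,
      fun w hw => ?_⟩)
    by_contra! hwx
    exact hbl y (by omega) w hw ⟨hwx, by omega⟩
  · rintro ((⟨hx1, hx2⟩ | ⟨⟨⟨hx1, hx2⟩, hbl⟩, hle⟩) | ⟨hx1, hx2⟩)
    · refine ⟨⟨hx1, by omega⟩, fun b hb a ha hax => ?_⟩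
      have := hlo_row b (by omega) a ha
      omega
    · refine ⟨⟨by omega, by omega⟩, fun b hb a ha hax => ?_⟩
      rcases Nat.lt_succ_iff_lt_or_eq.1 hb with hb | rfl
      · exact hbl b hb a ha hax
      · exact absurd (hle a ha) (by omega)
    · refine ⟨⟨by omega, hx2⟩, fun b hb a ha hax => ?_⟩
      have := Λ.hi_mono (Nat.lt_succ_iff.1 hb)
      omega

lemma card_avail_succ (hR : ∀ b ≤ y, Λ.IsFlushedRow R b) :
    #(Λ.avail R (y + 1)) + #(R y) =
      #(Λ.avail R y) + 1 + (Λ.lo y - Λ.lo (y + 1)) + (Λ.hi (y + 1) - Λ.hi y) := by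
  have h := hR y le_rfl
  have hmid : #((Λ.avail R y).filter (fun x => ∀ w ∈ R y, x ≤ w)) + #(R y) =
      #(Λ.avail R y) + 1 := by
    rw [filter_le_row_eq h, card_sdiff_of_subset
      ((erase_subset _ _).trans h.subset), card_erase_of_mem ((R y).min'_mem _)]
    have := card_le_card h.subset
    have := card_pos.2 h.nonempty
    omega
  have hdisj₁ : Disjoint (Ico (Λ.lo (y + 1)) (Λ.lo y))
      ((Λ.avail R y).filter (fun x => ∀ w ∈ R y, x ≤ w)) :=
    disjoint_left.2 fun x hx hx' => by
      have := (mem_avail.1 (mem_filter.1 hx').1).1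
      simp only [mem_Ico] at hx
      omega
  have hdisj₂ : Disjoint (Ico (Λ.lo (y + 1)) (Λ.lo y) ∪
      (Λ.avail R y).filter (fun x => ∀ w ∈ R y, x ≤ w)) (Ioc (Λ.hi y) (Λ.hi (y + 1))) :=
    disjoint_left.2 fun x hx hx' => by
      simp only [mem_Ioc] at hx'
      rcases mem_union.1 hx with hx | hx
      · have := Λ.lo_le_hi y
        simp only [mem_Ico] at hx
        omega
      · have := (mem_avail.1 (mem_filter.1 hx).1).1
        omega
  rw [avail_succ hR, card_union_of_disjoint hdisj₂, card_union_of_disjoint hdisj₁,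
    Nat.card_Ico, Nat.card_Ioc]
  omega

lemma card_avail_add_sum_card (hR : ∀ b < z, Λ.IsFlushedRow R b) :
    #(Λ.avail R z) + ∑ t ∈ range z, #(R t) = Λ.hi z - Λ.lo z + z + 1 := by
  induction z with
  | zero =>
    rw [avail_zero, Nat.card_Icc, range_zero, sum_empty]
    have := Λ.lo_le_hi 0
    omega
  | succ z ih =>
    have h := card_avail_succ (fun b hb => hR b (Nat.lt_succ_of_le hb))
    have := ih fun b hb => hR b (by omega)
    have := Λ.lo_le_hi z
    have := Λ.lo_le_hi (z + 1)
    have := Λ.lo_anti (Nat.le_add_right z 1)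
    have := Λ.hi_mono (Nat.le_add_right z 1)
    rw [sum_range_succ]
    omega

lemma numGT_avail_succ (hR : ∀ b ≤ y, Λ.IsFlushedRow R b) (hx : x ∈ Λ.avail R y)
    (hle : ∀ w ∈ R y, x ≤ w) :
    (Λ.avail R (y + 1)).numGT x + #(R y) =
      (Λ.avail R y).numGT x + 1 + (Λ.hi (y + 1) - Λ.hi y) := by
  have h := hR y le_rfl
  have hmR := (R y).min'_mem h.nonempty
  have hxlo := (mem_avail.1 hx).1
  have hmid_le : ∀ w ∈ (Λ.avail R y).filter (fun x => ∀ w ∈ R y, x ≤ w), w ≤ Λ.hi y :=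
    fun w hw => (mem_avail.1 (mem_filter.1 hw).1).1.2
  have hy : (Λ.avail R y).numGT x = #(((Λ.avail R y).filter
      (fun x => ∀ w ∈ R y, x ≤ w)).filter (x < ·)) + (#(R y) - 1) := by
    have hsub := (erase_subset ((R y).min' h.nonempty) _).trans h.subset
    have hgt : ∀ w ∈ (R y).erase ((R y).min' h.nonempty), x < w := fun w hw =>
      (hle _ hmR).trans_lt (lt_of_le_of_ne ((R y).min'_le w (mem_of_mem_erase hw))
        (mem_erase.1 hw).1.symm)
    rw [numGT, filter_le_row_eq h, ← sdiff_union_of_subset hsub, filter_union,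
      card_union_of_disjoint (disjoint_filter_filter sdiff_disjoint),
      sdiff_union_of_subset hsub, filter_true_of_mem hgt, card_erase_of_mem hmR]
  have hy1 : (Λ.avail R (y + 1)).numGT x = #(((Λ.avail R y).filter
      (fun x => ∀ w ∈ R y, x ≤ w)).filter (x < ·)) + (Λ.hi (y + 1) - Λ.hi y) := by
    have hlow : (Ico (Λ.lo (y + 1)) (Λ.lo y)).filter (x < ·) = ∅ :=
      filter_false_of_mem fun w hw => by simp only [mem_Ico] at hw; omega
    have hhigh :
        (Ioc (Λ.hi y) (Λ.hi (y + 1))).filter (x < ·) = Ioc (Λ.hi y) (Λ.hi (y + 1)) :=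
      filter_true_of_mem fun w hw => by simp only [mem_Ioc] at hw; omega
    rw [numGT, avail_succ hR, filter_union, filter_union, hlow, hhigh, empty_union,
      card_union_of_disjoint (disjoint_left.2 fun w hw hw' => by
        have := hmid_le w (mem_filter.1 hw).1
        simp only [mem_Ioc] at hw'
        omega), Nat.card_Ioc]
  have := card_pos.2 h.nonempty
  omega

end Staircase

lemma rowN_insert {T : Set (ℕ × ℕ)} {q : ℕ × ℕ} (hT : T.Finite) (hq : q ∉ T) (y : ℕ) :
    rowN (insert q T) y = rowN T y + if q.2 = y then 1 else 0 := by
  unfold rowN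
  split_ifs with h
  · rw [show {p ∈ insert q T | p.2 = y} = insert q {p ∈ T | p.2 = y} by ext p; aesop,
      Set.ncard_insert_of_notMem (fun h' => hq h'.1) (hT.subset fun _ hp => hp.1)]
  · rw [show {p ∈ insert q T | p.2 = y} = {p ∈ T | p.2 = y} by ext p; aesop, add_zero]

lemma rowN_diff_singleton {T : Set (ℕ × ℕ)} {q : ℕ × ℕ} (hT : T.Finite) (hq : q ∈ T) (y : ℕ) :
    rowN (T \ {q}) y + (if q.2 = y then 1 else 0) = rowN T y := by
  have := rowN_insert (hT.subset Set.sdiff_subset) (show q ∉ T \ {q} from fun h => h.2 rfl) y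
  rwa [Set.insert_sdiff_singleton, Set.insert_eq_of_mem hq, eq_comm] at this

namespace Staircase

open Finset

variable {Λ : Staircase} {R : ℕ → Finset ℕ} {T T' S : Set (ℕ × ℕ)} {p : ℕ × ℕ} {x y : ℕ}

lemma Crossing.irrefl (p : ℕ × ℕ) : ¬ Λ.Crossing p p := fun h => h.1.false

lemma pts_finite : Λ.pts.Finite :=
  ((Set.finite_Iic (Λ.hi Λ.top)).prod (Set.finite_Iic Λ.top)).subset
    fun _ hp => ⟨hp.2.2.trans (Λ.hi_mono hp.1), hp.1⟩

variable (Λ) in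
noncomputable def rows (T : Set (ℕ × ℕ)) (y : ℕ) : Finset ℕ :=
  open Classical in (range (Λ.hi y + 1)).filter fun x => (x, y) ∈ T

variable (Λ) in
def ofRows (R : ℕ → Finset ℕ) : Set (ℕ × ℕ) := {p | p.2 ≤ Λ.top ∧ p.1 ∈ R p.2}

lemma mem_rows (hT : T ⊆ Λ.pts) : x ∈ Λ.rows T y ↔ (x, y) ∈ T := by
  simp only [rows, mem_filter, mem_range, and_iff_right_iff_imp]
  exact fun h => Nat.lt_succ_of_le (hT h).2.2

lemma ofRows_rows (hT : T ⊆ Λ.pts) : Λ.ofRows (Λ.rows T) = T := by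
  ext p
  simp only [ofRows, Set.mem_ofPred_eq, mem_rows hT, and_iff_right_iff_imp]
  exact fun h => (hT h).1

lemma rowN_ofRows (hy : y ≤ Λ.top) : rowN (Λ.ofRows R) y = #(R y) := by
  have : {p ∈ Λ.ofRows R | p.2 = y} = (fun a => (a, y)) '' ↑(R y) := by
    ext ⟨a, b⟩
    simp only [ofRows, Set.mem_ofPred_eq, Set.mem_image, mem_coe, Prod.mk.injEq]
    constructor
    · rintro ⟨⟨-, ha⟩, rfl⟩
      exact ⟨a, ha, rfl, rfl⟩
    · rintro ⟨a, ha, rfl, rfl⟩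
      exact ⟨⟨hy, ha⟩, rfl⟩
  rw [rowN, this, Set.ncard_image_of_injective _ (Prod.mk_left_injective y),
    Set.ncard_coe_finset]

lemma rowN_eq_card_rows (hT : T ⊆ Λ.pts) (hy : y ≤ Λ.top) : rowN T y = #(Λ.rows T y) := by
  conv_lhs => rw [← ofRows_rows hT]
  exact rowN_ofRows hy

lemma ncard_eq_sum_rowN (hT : T ⊆ Λ.pts) :
    T.ncard = ∑ y ∈ range (Λ.top + 1), rowN T y := by
  classical
  have hfin := Λ.pts_finite.subset hT
  rw [Set.ncard_eq_toFinset_card T hfin, card_eq_sum_card_fiberwise (f := Prod.snd)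
    (t := range (Λ.top + 1)) fun p hp => mem_range.2 (Nat.lt_succ_of_le (hT (by simpa using hp)).1)]
  refine sum_congr rfl fun y _ => ?_
  rw [rowN, ← Set.ncard_coe_finset]
  congr 1
  ext p
  simp

lemma ofRows_subset_pts (hR : ∀ y ≤ Λ.top, R y ⊆ Λ.avail R y) : Λ.ofRows R ⊆ Λ.pts :=
  fun _ ⟨hy, hx⟩ => ⟨hy, (mem_avail.1 (hR _ hy hx)).1⟩

lemma nonCrossing_ofRows (hR : ∀ y ≤ Λ.top, R y ⊆ Λ.avail R y) :
    Λ.NonCrossing (Λ.ofRows R) :=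
  fun _ hp _ ⟨hy, hx⟩ ⟨h1, h2, h3⟩ => (mem_avail.1 (hR _ hy hx)).2 _ h2 _ hp.2 ⟨h1, h3⟩

namespace IsTree

variable (hT : Λ.IsTree T)
include hT

lemma mem_of_forall_not_crossing (hp : p ∈ Λ.pts)
    (hcomp : ∀ q ∈ T, ¬ Λ.Crossing q p ∧ ¬ Λ.Crossing p q) : p ∈ T := by
  refine hT.2.2 (insert p T) (Set.subset_insert p T) (Set.insert_subset hp hT.1) ?_ ▸
    Set.mem_insert p T
  rintro a (rfl | ha) b (rfl | hb)
  · exact Crossing.irrefl _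
  · exact (hcomp b hb).2
  · exact (hcomp a ha).1
  · exact hT.2.1 a ha b hb

lemma rows_subset_avail : Λ.rows T y ⊆ Λ.avail (Λ.rows T) y := fun x hx => by
  have hxT := (mem_rows hT.1).1 hx
  refine mem_avail.2 ⟨(hT.1 hxT).2, fun b hb a ha hax => ?_⟩
  exact hT.2.1 _ ((mem_rows hT.1).1 ha) _ hxT ⟨hax.1, hb, hax.2⟩

lemma rows_upward (hy : y ≤ Λ.top) :
    ∀ u ∈ Λ.rows T y, ∀ x ∈ Λ.avail (Λ.rows T) y, u ≤ x → x ∈ Λ.rows T y := by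
  intro u hu x hx hux
  obtain ⟨hxy, hbl⟩ := mem_avail.1 hx
  refine (mem_rows hT.1).2 (hT.mem_of_forall_not_crossing ⟨hy, hxy⟩ fun ⟨a, b⟩ hq => ⟨?_, ?_⟩)
  · exact fun ⟨h1, h2, h3⟩ => hbl b h2 a ((mem_rows hT.1).2 hq) ⟨h1, h3⟩
  · exact fun ⟨h1, h2, h3⟩ => hT.2.1 _ ((mem_rows hT.1).1 hu) _ hq ⟨hux.trans_lt h1, h2, h3⟩

/-- The witness is the largest among `lo y` and the `x ≤ hi y` that are first coordinates of
points of `T` above row `y`. -/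
lemma rows_nonempty (hy : y ≤ Λ.top) : (Λ.rows T y).Nonempty := by
  classical
  set C := (range (Λ.hi y + 1)).filter fun a => ∃ b, y < b ∧ (a, b) ∈ T
  have hne : (insert (Λ.lo y) C).Nonempty := insert_nonempty _ _
  set x := (insert (Λ.lo y) C).max' hne
  have hlo : Λ.lo y ≤ x := le_max' _ _ (mem_insert_self _ _)
  have hxC : x = Λ.lo y ∨ x ∈ C := mem_insert.1 (max'_mem _ hne)
  have hhi : x ≤ Λ.hi y := by
    rcases hxC with h | h
    · exact h ▸ Λ.lo_le_hi y
    · exact Nat.lt_succ_iff.1 (mem_range.1 (mem_filter.1 h).1)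
  refine ⟨x, (mem_rows hT.1).2 (hT.mem_of_forall_not_crossing ⟨hy, hlo, hhi⟩
    fun ⟨a, b⟩ hq => ⟨fun ⟨h1, h2, h3⟩ => ?_, fun ⟨h1, h2, h3⟩ => ?_⟩)⟩
  · rcases hxC with h | h
    · have := (hT.1 hq).2.1
      have := Λ.lo_anti h2.le
      dsimp only at *
      omega
    · obtain ⟨b', hb', hxb'⟩ := (mem_filter.1 h).2
      exact hT.2.1 _ hq _ hxb' ⟨h1, by omega, h3⟩
  · have haC : a ∈ C := mem_filter.2 ⟨mem_range.2 (Nat.lt_succ_of_le h3), b, h2, hq⟩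
    exact absurd (le_max' _ _ (mem_insert_of_mem haC)) (not_le.2 h1)

lemma isFlushedRow (hy : y ≤ Λ.top) : Λ.IsFlushedRow (Λ.rows T) y :=
  ⟨hT.rows_subset_avail, hT.rows_nonempty hy, hT.rows_upward hy⟩

lemma avail_top_subset : Λ.avail (Λ.rows T) Λ.top ⊆ Λ.rows T Λ.top := fun x hx => by
  obtain ⟨hxy, hbl⟩ := mem_avail.1 hx
  refine (mem_rows hT.1).2 (hT.mem_of_forall_not_crossing ⟨le_rfl, hxy⟩ fun ⟨a, b⟩ hq => ⟨?_, ?_⟩)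
  · exact fun ⟨h1, h2, h3⟩ => hbl b h2 a ((mem_rows hT.1).2 hq) ⟨h1, h3⟩
  · exact fun ⟨_, h2, _⟩ => absurd (hT.1 hq).1 (not_le.2 h2)

lemma sum_rowN : ∑ y ∈ range (Λ.top + 1), rowN T y = Λ.hi Λ.top - Λ.lo Λ.top + Λ.top + 1 := by
  rw [← card_avail_add_sum_card (R := Λ.rows T) fun b _ => hT.isFlushedRow (by omega),
    le_antisymm (card_le_card hT.avail_top_subset) (card_le_card hT.rows_subset_avail),
    add_comm (#_), ← sum_range_succ]
  exact sum_congr rfl fun y hy => rowN_eq_card_rows hT.1 (by simpa [Nat.lt_succ_iff] using hy)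

lemma ncard_eq : T.ncard = Λ.hi Λ.top - Λ.lo Λ.top + Λ.top + 1 := by
  rw [ncard_eq_sum_rowN hT.1, hT.sum_rowN]

end IsTree

lemma exists_isTree_superset (hS : S ⊆ Λ.pts) (hSc : Λ.NonCrossing S) :
    ∃ T, Λ.IsTree T ∧ S ⊆ T := by
  have hfin : {U | S ⊆ U ∧ U ⊆ Λ.pts ∧ Λ.NonCrossing U}.Finite :=
    Λ.pts_finite.finite_subsets.subset fun U hU => hU.2.1
  obtain ⟨T, hST, hmax⟩ := hfin.exists_le_maximal (a := S) ⟨le_rfl, hS, hSc⟩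
  exact ⟨T, ⟨hmax.prop.2.1, hmax.prop.2.2, fun T' hTT' hT' hT'c =>
    hmax.eq_of_superset ⟨hST.trans hTT', hT', hT'c⟩ hTT'⟩, hST⟩

/-- Since all trees have the same size, a noncrossing set of that size is maximal. -/
lemma isTree_of_le_ncard (hS : S ⊆ Λ.pts) (hSc : Λ.NonCrossing S)
    (hcard : Λ.hi Λ.top - Λ.lo Λ.top + Λ.top + 1 ≤ S.ncard) : Λ.IsTree S := by
  obtain ⟨T, hT, hST⟩ := exists_isTree_superset hS hSc
  rwa [Set.eq_of_subset_of_ncard_le hST (hT.ncard_eq ▸ hcard) (Λ.pts_finite.subset hT.1)]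

variable (Λ) in
/-- The row counts of trees: the partial-sum bound is `card_avail_add_sum_card`, and the total is
the common size `IsTree.sum_rowN` of all trees. -/
def IsRowProfile (c : ℕ → ℕ) : Prop :=
  (∀ y ≤ Λ.top, 0 < c y) ∧
    (∀ y ≤ Λ.top, ∑ t ∈ range (y + 1), c t ≤ Λ.hi y - Λ.lo y + y + 1) ∧
    ∑ t ∈ range (Λ.top + 1), c t = Λ.hi Λ.top - Λ.lo Λ.top + Λ.top + 1

lemma IsRowProfile.congr {c c' : ℕ → ℕ} (hc : Λ.IsRowProfile c) (h : ∀ y ≤ Λ.top, c y = c' y) :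
    Λ.IsRowProfile c' := by
  have hsum : ∀ y ≤ Λ.top, ∑ t ∈ range (y + 1), c t = ∑ t ∈ range (y + 1), c' t :=
    fun y hy => sum_congr rfl fun t ht => h t (by simp at ht; omega)
  exact ⟨fun y hy => h y hy ▸ hc.1 y hy, fun y hy => hsum y hy ▸ hc.2.1 y hy,
    hsum _ le_rfl ▸ hc.2.2⟩

lemma IsTree.isRowProfile (hT : Λ.IsTree T) : Λ.IsRowProfile (rowN T) := by
  have hrow : ∀ y ≤ Λ.top, rowN T y = #(Λ.rows T y) := fun y hy => rowN_eq_card_rows hT.1 hy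
  refine ⟨fun y hy => hrow y hy ▸ card_pos.2 (hT.rows_nonempty hy), fun y hy => ?_, hT.sum_rowN⟩
  rw [← card_avail_add_sum_card (R := Λ.rows T) fun b _ => hT.isFlushedRow (by omega),
    sum_range_succ, hrow y hy, add_comm, sum_congr rfl fun t ht => hrow t (by simp at ht; omega)]
  exact Nat.add_le_add_right (card_le_card hT.rows_subset_avail) _

lemma IsTree.eq_of_rowN_eq (hT : Λ.IsTree T) (hT' : Λ.IsTree T')
    (h : ∀ y ≤ Λ.top, rowN T y = rowN T' y) : T = T' := by
  have hrows : ∀ y ≤ Λ.top, Λ.rows T y = Λ.rows T' y := by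
    intro y
    induction y using Nat.strong_induction_on with
    | _ y ih =>
      intro hy
      have hflushed := hT.isFlushedRow hy
      have hflushed' := hT'.isFlushedRow hy
      rw [eq_topN_card hflushed.subset hflushed.upward, eq_topN_card hflushed'.subset
        hflushed'.upward, avail_congr fun b hb => ih b hb (by omega),
        ← rowN_eq_card_rows hT.1 hy, ← rowN_eq_card_rows hT'.1 hy, h y hy]
  rw [← ofRows_rows hT.1, ← ofRows_rows hT'.1]
  ext p
  simp only [ofRows, Set.mem_ofPred_eq]
  exact and_congr_right fun hp => by rw [hrows p.2 hp]

variable (Λ) in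
noncomputable def flushRows (c : ℕ → ℕ) : ℕ → Finset ℕ
  | y => (Λ.avail (fun b => if b < y then flushRows c b else ∅) y).topN (c y)

lemma flushRows_eq (c : ℕ → ℕ) (y : ℕ) :
    Λ.flushRows c y = (Λ.avail (Λ.flushRows c) y).topN (c y) := by
  rw [flushRows, avail_congr fun b hb => if_pos hb]

lemma isFlushedRow_flushRows {c : ℕ → ℕ} (hc : Λ.IsRowProfile c) :
    ∀ y ≤ Λ.top, Λ.IsFlushedRow (Λ.flushRows c) y ∧ #(Λ.flushRows c y) = c y := by
  intro y
  induction y using Nat.strong_induction_on with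
  | _ y ih =>
    intro hy
    have hcard : #(Λ.avail (Λ.flushRows c) y) + ∑ t ∈ range y, c t =
        Λ.hi y - Λ.lo y + y + 1 := by
      rw [← sum_congr rfl fun t ht => (ih t (mem_range.1 ht) (by simp at ht; omega)).2]
      exact card_avail_add_sum_card fun b hb => (ih b hb (by omega)).1
    have hsum : ∑ t ∈ range y, c t + c y ≤ Λ.hi y - Λ.lo y + y + 1 :=
      sum_range_succ c y ▸ hc.2.1 y hy
    have hcy : #(Λ.flushRows c y) = c y := by
      rw [flushRows_eq, card_topN]
      omega
    refine ⟨⟨?_, card_pos.1 (hcy ▸ hc.1 y hy), ?_⟩, hcy⟩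
    · rw [flushRows_eq]
      exact topN_subset _ _
    · rw [flushRows_eq]
      exact fun u hu x _ hux => mem_topN_of_le hu ‹_› hux

lemma exists_isTree_rowN {c : ℕ → ℕ} (hc : Λ.IsRowProfile c) :
    ∃ T, Λ.IsTree T ∧ ∀ y ≤ Λ.top, rowN T y = c y := by
  have hR := isFlushedRow_flushRows hc
  have hsub : ∀ y ≤ Λ.top, Λ.flushRows c y ⊆ Λ.avail (Λ.flushRows c) y :=
    fun y hy => (hR y hy).1.subset
  have hrowN : ∀ y ≤ Λ.top, rowN (Λ.ofRows (Λ.flushRows c)) y = c y :=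
    fun y hy => (rowN_ofRows hy).trans (hR y hy).2
  refine ⟨_, isTree_of_le_ncard (ofRows_subset_pts hsub) (nonCrossing_ofRows hsub) ?_, hrowN⟩
  rw [ncard_eq_sum_rowN (ofRows_subset_pts hsub), ← hc.2.2]
  exact (sum_congr rfl fun y hy => hrowN y (by simp at hy; omega)).ge


end Staircase

lemma List.getD_set_set {l : List ℕ} {i k a b : ℕ} (hik : i < k) (hk : k < l.length) (y : ℕ) :
    ((l.set i a).set k b).getD y 0 = if y = k then b else if y = i then a else l.getD y 0 := by
  simp only [List.getD_eq_getElem?_getD, List.getElem?_set, List.length_set]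
  by_cases h1 : y = k
  · subst h1; simp [hk]
  by_cases h2 : y = i
  · subst h2; simp [Ne.symm h1, hik.trans hk, h1]
  · simp [Ne.symm h1, Ne.symm h2, h1, h2]

namespace Staircase

open Finset

/-- In the notation of `RotationAt`: `q = (m, i)`, `r = (m', i)` and `p = (m, k)`. -/
structure IsRotationSite (T : Set (ℕ × ℕ)) (i k m m' : ℕ) : Prop where
  lt_row : i < k
  lt_col : m < m'
  mem_corner : (m, i) ∈ T
  mem_right : (m', i) ∈ T
  mem_above : (m, k) ∈ T
  le_of_mem : ∀ x, (x, i) ∈ T → m ≤ x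
  le_of_mem_of_ne : ∀ x, (x, i) ∈ T → x ≠ m → m' ≤ x
  notMem_between : ∀ b, i < b → b < k → (m, b) ∉ T

variable {Λ : Staircase} {R : ℕ → Finset ℕ} {T T' : Set (ℕ × ℕ)} {i k m m' y : ℕ}

lemma mem_avail_and_numGT_of_gap (hR : ∀ b ≤ Λ.top, Λ.IsFlushedRow R b) (hm : m ∈ R i)
    (hmin : ∀ w ∈ R i, m ≤ w) :
    ∀ y, i ≤ y → y ≤ Λ.top → (∀ b, i < b → b < y → m ∉ R b) →
      m ∈ Λ.avail R y ∧ (Λ.avail R y).numGT m + ∑ t ∈ Ico i y, #(R t) =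
        (Λ.avail R i).numGT m + ∑ t ∈ Ico i y, (Λ.hi (t + 1) - Λ.hi t + 1) := by
  intro y
  induction y with
  | zero =>
    intro hi _ _
    obtain rfl : i = 0 := by omega
    simp [(hR 0 (Nat.zero_le _)).subset hm]
  | succ y ih =>
    intro hiy hy hgap
    rcases eq_or_lt_of_le hiy with rfl | hiy
    · simp [(hR _ hy).subset hm]
    obtain ⟨hA, hnum⟩ := ih (by omega) (by omega) fun b hb hby => hgap b hb (by omega)
    have hRy : ∀ b ≤ y, Λ.IsFlushedRow R b := fun b hb => hR b (by omega)
    have hle : ∀ w ∈ R y, m ≤ w := by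
      rcases eq_or_lt_of_le (Nat.lt_succ_iff.1 hiy) with rfl | hlt
      · exact hmin
      · exact fun w hw => (lt_of_notMem_row (hRy y le_rfl) hA (hgap y hlt (by omega)) w hw).le
    refine ⟨?_, ?_⟩
    · rw [avail_succ hRy]
      exact mem_union_left _ (mem_union_right _ (mem_filter.2 ⟨hA, hle⟩))
    · have := numGT_avail_succ hRy hA hle
      rw [sum_Ico_succ_top (by omega), sum_Ico_succ_top (by omega)]
      omega

lemma mem_row_iff_of_gap (hR : ∀ b ≤ Λ.top, Λ.IsFlushedRow R b) (hm : m ∈ R i)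
    (hmin : ∀ w ∈ R i, m ≤ w) (hiy : i < y) (hy : y ≤ Λ.top)
    (hgap : ∀ b, i < b → b < y → m ∉ R b) :
    m ∈ R y ↔ #(R i) + ∑ t ∈ Ico i y, (Λ.hi (t + 1) - Λ.hi t + 1) ≤
      ∑ t ∈ Ico i (y + 1), #(R t) := by
  obtain ⟨hA, hnum⟩ := mem_avail_and_numGT_of_gap hR hm hmin y hiy.le hy hgap
  have hi := (hR i (by omega))
  have := numGT_add_one_of_isLeast hi.subset hi.upward hm hmin
  rw [mem_row_iff_numGT_lt (hR y hy) hA, sum_Ico_succ_top hiy.le]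
  omega

namespace IsTree

variable (hT : Λ.IsTree T)
include hT

lemma hi_lt_of_gap (hm : (m, i) ∈ T) (hmin : ∀ x, (x, i) ∈ T → m ≤ x) (hiy : i < y)
    (hgap : ∀ b, i < b → b ≤ y → (m, b) ∉ T) {x : ℕ} (hx : (x, y) ∈ T) : Λ.hi i < x := by
  have hrows : ∀ {b}, m ∈ Λ.rows T b ↔ (m, b) ∈ T := mem_rows hT.1
  have hR : ∀ b ≤ Λ.top, Λ.IsFlushedRow (Λ.rows T) b := fun b hb => hT.isFlushedRow hb
  obtain ⟨hA, -⟩ := mem_avail_and_numGT_of_gap hR (hrows.2 hm)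
    (fun w hw => hmin w ((mem_rows hT.1).1 hw)) y hiy.le (hT.1 hx).1
    fun b hb hby => fun h => hgap b hb hby.le (hrows.1 h)
  have hmx := lt_of_notMem_row (hR y (hT.1 hx).1) hA (fun h => hgap y hiy le_rfl (hrows.1 h)) x
    ((mem_rows hT.1).2 hx)
  exact lt_of_not_ge fun hxi => hT.2.1 _ hm _ hx ⟨hmx, hiy, hxi⟩

lemma rotationAt_iff {ω : List ℕ} :
    RotationAt ω T (m, i) T' ↔
      ∃ k m', IsRotationSite T i k m m' ∧ T' = insert (m', k) (T \ {(m, i)}) := by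
  constructor
  · rintro ⟨⟨m₁, k⟩, ⟨m', i₁⟩, hp, hq, hr, hpq, hik, hri, hmm', hrect, rfl⟩
    dsimp only at *
    subst m₁ i₁
    have hmin : ∀ x, (x, i) ∈ T → m ≤ x := fun x hx => le_of_not_gt fun hxm =>
      hT.2.1 _ hx _ hp ⟨hxm, hik, (hT.1 hq).2.2⟩
    refine ⟨k, m', ⟨hik, hmm', hq, hr, hp, hmin, fun x hx hxm => ?_, fun b hb hbk hmb => ?_⟩, rfl⟩
    · refine le_of_not_gt fun hxm' => ?_
      rcases hrect (x, i) hx (hmin x hx) hxm'.le le_rfl hik.le with h | h | h <;>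
        simp only [Prod.mk.injEq] at h <;> omega
    · rcases hrect (m, b) hmb le_rfl hmm'.le hb.le hbk.le with h | h | h <;>
        simp only [Prod.mk.injEq] at h <;> omega
  · rintro ⟨k, m', hs, rfl⟩
    refine ⟨(m, k), (m', i), hs.mem_above, hs.mem_corner, hs.mem_right, rfl, hs.lt_row, rfl,
      hs.lt_col, fun ⟨a, b⟩ hab ha ha' hb hb' => ?_, rfl⟩
    dsimp only at *
    have hm'i : m' ≤ Λ.hi i := (hT.1 hs.mem_right).2.2
    rcases eq_or_lt_of_le hb with rfl | hb
    · by_cases ham : a = m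
      · exact Or.inr (Or.inl (by rw [ham]))
      · exact Or.inr (Or.inr (by rw [le_antisymm ha' (hs.le_of_mem_of_ne a hab ham)]))
    rcases eq_or_lt_of_le hb' with rfl | hb'
    · rcases eq_or_lt_of_le ha with rfl | ha
      · exact Or.inl rfl
      · exact absurd ⟨ha, hb, ha'.trans hm'i⟩ (hT.2.1 _ hs.mem_corner _ hab)
    · have := hT.hi_lt_of_gap hs.mem_corner hs.le_of_mem hb
        (fun c hc hcb => hs.notMem_between c hc (by omega)) hab
      omega

end IsTree

namespace IsRotationSite

variable (hT : Λ.IsTree T) (hs : IsRotationSite T i k m m')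
include hT hs

lemma notMem : (m', k) ∉ T :=
  fun h => hT.2.1 _ hs.mem_corner _ h ⟨hs.lt_col, hs.lt_row, (hT.1 hs.mem_right).2.2⟩

lemma one_lt_rowN : 1 < rowN T i := by
  rw [rowN_eq_card_rows hT.1 (hT.1 hs.mem_corner).1]
  exact one_lt_card.2 ⟨m, (mem_rows hT.1).2 hs.mem_corner, m', (mem_rows hT.1).2 hs.mem_right,
    hs.lt_col.ne⟩

lemma rowN_rotate (y : ℕ) :
    rowN (insert (m', k) (T \ {(m, i)})) y + (if y = i then 1 else 0) =
      rowN T y + if y = k then 1 else 0 := by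
  have hfin := Λ.pts_finite.subset hT.1
  rw [rowN_insert (hfin.subset Set.sdiff_subset) fun h => hs.notMem hT h.1, add_right_comm,
    ← rowN_diff_singleton hfin hs.mem_corner y]
  simp only [eq_comm]

lemma isTree_rotate : Λ.IsTree (insert (m', k) (T \ {(m, i)})) := by
  have hfin := Λ.pts_finite.subset hT.1
  have hk := hT.1 hs.mem_above
  have hm' := hT.1 hs.mem_right
  have hm := hT.1 hs.mem_corner
  have hnew : (m', k) ∈ Λ.pts := ⟨hk.1, (Λ.lo_anti hs.lt_row.le).trans (hm.2.1.trans hs.lt_col.le),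
    hm'.2.2.trans (Λ.hi_mono hs.lt_row.le)⟩
  refine isTree_of_le_ncard (Set.insert_subset hnew (Set.sdiff_subset.trans hT.1)) ?_ ?_
  · rintro ⟨x, b⟩ (h | ⟨hxb, hne⟩) c (rfl | ⟨hc, -⟩)
    · obtain ⟨rfl, rfl⟩ := Prod.mk.inj h
      exact Crossing.irrefl _
    · obtain ⟨rfl, rfl⟩ := Prod.mk.inj h
      exact fun ⟨h1, h2, h3⟩ => hT.2.1 _ hs.mem_above _ hc ⟨hs.lt_col.trans h1, h2, h3⟩
    · rintro ⟨h1, h2, h3⟩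
      dsimp only at *
      rcases lt_trichotomy b i with hbi | rfl | hbi
      · exact hT.2.1 _ hxb _ hs.mem_right ⟨h1, hbi, h3⟩
      · exact absurd (hs.le_of_mem_of_ne x hxb fun h => hne (by rw [h]; rfl)) (not_le.2 h1)
      · have := hT.hi_lt_of_gap hs.mem_corner hs.le_of_mem hbi
          (fun c hc hcb => hs.notMem_between c hc (by omega)) hxb
        have : m' ≤ Λ.hi i := hm'.2.2
        omega
    · exact hT.2.1 _ hxb c hc
  · rw [Set.ncard_insert_of_notMem (fun h => hs.notMem hT h.1) (hfin.subset Set.sdiff_subset),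
      Set.ncard_sdiff_singleton_add_one hs.mem_corner hfin, hT.ncard_eq]

end IsRotationSite

end Staircase

namespace Staircase

open Finset

variable {Λ : Staircase} {T T' : Set (ℕ × ℕ)} {δ μ μ' : List ℕ} {i k m y : ℕ}

namespace IsTree

variable (hT : Λ.IsTree T) (hd : ∀ t, Λ.hi (t + 1) = Λ.hi t + δ.getD t 0)
  (hμ : ∀ y ≤ Λ.top, rowN T y = μ.getD y 0 + 1)
include hT hd hμ

/-- The inequality says that after the east steps of block `y`, the δ-altitude of `μ` is back to
its value at the valley before the `(i+1)`-st north step. -/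
lemma mem_iff_of_gap (hm : (m, i) ∈ T) (hmin : ∀ x, (x, i) ∈ T → m ≤ x) (hiy : i < y)
    (hy : y ≤ Λ.top) (hgap : ∀ b, i < b → b < y → (m, b) ∉ T) :
    (m, y) ∈ T ↔ ∑ t ∈ Ico i y, δ.getD t 0 ≤ ∑ t ∈ Ico (i + 1) (y + 1), μ.getD t 0 := by
  have hrows : ∀ {b}, m ∈ Λ.rows T b ↔ (m, b) ∈ T := mem_rows hT.1
  have hrow_sum : ∑ t ∈ Ico i (y + 1), #(Λ.rows T t) =
      ∑ t ∈ Ico i (y + 1), μ.getD t 0 + (y + 1 - i) := by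
    rw [← Nat.card_Ico, card_eq_sum_ones, ← sum_add_distrib]
    refine sum_congr rfl fun t ht => ?_
    rw [← rowN_eq_card_rows hT.1 (by simp at ht; omega), hμ t (by simp at ht; omega)]
  have hhi_sum : ∑ t ∈ Ico i y, (Λ.hi (t + 1) - Λ.hi t + 1) =
      ∑ t ∈ Ico i y, δ.getD t 0 + (y - i) := by
    rw [← Nat.card_Ico, card_eq_sum_ones, ← sum_add_distrib]
    exact sum_congr rfl fun t _ => by rw [hd t, Nat.add_sub_cancel_left]
  rw [← hrows, mem_row_iff_of_gap (fun b hb => hT.isFlushedRow hb) (hrows.2 hm)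
      (fun w hw => hmin w ((mem_rows hT.1).1 hw)) hiy hy
      fun b hb hby h => hgap b hb hby (hrows.1 h),
    ← rowN_eq_card_rows hT.1 (by omega), hμ i (by omega), hrow_sum, hhi_sum,
    sum_eq_sum_Ico_succ_bot (show i < y + 1 by omega) fun t => μ.getD t 0]
  omega

lemma mem_and_gap_iff (hm : (m, i) ∈ T) (hmin : ∀ x, (x, i) ∈ T → m ≤ x) (hik : i < k)
    (hk : k ≤ Λ.top) :
    ((m, k) ∈ T ∧ ∀ b, i < b → b < k → (m, b) ∉ T) ↔
      (∑ t ∈ Ico i k, δ.getD t 0 ≤ ∑ t ∈ Ico (i + 1) (k + 1), μ.getD t 0 ∧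
        ∀ k', i < k' → k' < k →
          ∑ t ∈ Ico (i + 1) (k' + 1), μ.getD t 0 < ∑ t ∈ Ico i k', δ.getD t 0) := by
  have hiff := fun {y} hiy hyk hgap => hT.mem_iff_of_gap hd hμ (y := y) hm hmin hiy
    (le_trans (Nat.le_of_lt_succ (Nat.lt_succ_of_le hyk)) hk) hgap
  constructor
  · rintro ⟨hmk, hgap⟩
    refine ⟨(hiff hik le_rfl hgap).1 hmk, fun k' hik' hk' => not_le.1 fun h => ?_⟩
    exact hgap k' hik' hk' ((hiff hik' hk'.le fun b hb hbk => hgap b hb (by omega)).2 h)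
  · rintro ⟨hret, hstrict⟩
    have hgap : ∀ b, i < b → b < k → (m, b) ∉ T := by
      intro b
      induction b using Nat.strong_induction_on with
      | _ b ih =>
        exact fun hib hbk h => (hstrict b hib hbk).not_ge
          ((hiff hib hbk.le fun c hc hcb => ih c hcb hc (by omega)).1 h)
    exact ⟨(hiff hik le_rfl hgap).2 hret, hgap⟩

end IsTree

lemma IsRotationSite.rowN_rotate_eq {m' : ℕ} (hT : Λ.IsTree T) (hs : IsRotationSite T i k m m')
    (hlen : μ.length = Λ.top + 1) (hμ : ∀ y ≤ Λ.top, rowN T y = μ.getD y 0 + 1)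
    (hy : y ≤ Λ.top) :
    rowN (insert (m', k) (T \ {(m, i)})) y =
      ((μ.set i (μ.getD i 0 - 1)).set k (μ.getD k 0 + 1)).getD y 0 + 1 := by
  have hk := (hT.1 hs.mem_above).1
  have hrot := hs.rowN_rotate hT y
  have hi := hs.one_lt_rowN hT
  rw [hμ i (by have := hs.lt_row; omega)] at hi
  rw [List.getD_set_set hs.lt_row (by omega)]
  rcases eq_or_ne y k with rfl | hyk
  · simp only [↓reduceIte, if_neg hs.lt_row.ne', hμ y hy, add_zero] at hrot ⊢
    omega
  rcases eq_or_ne y i with rfl | hyi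
  · simp only [↓reduceIte, if_neg hyk, hμ y hy, add_zero] at hrot ⊢
    omega
  · simp only [if_neg hyk, if_neg hyi, hμ y hy, add_zero] at hrot ⊢
    exact hrot

theorem IsTree.dRot_iff_treeRotation (ω : List ℕ) (hT : Λ.IsTree T) (hT' : Λ.IsTree T')
    (hd : ∀ t, Λ.hi (t + 1) = Λ.hi t + δ.getD t 0) (hlen : μ.length = Λ.top + 1)
    (hlen' : μ'.length = Λ.top + 1) (hμ : ∀ y ≤ Λ.top, rowN T y = μ.getD y 0 + 1)
    (hμ' : ∀ y ≤ Λ.top, rowN T' y = μ'.getD y 0 + 1) :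
    DRot δ μ μ' ↔ TreeRotation ω T T' := by
  have hrows : ∀ {x y}, x ∈ Λ.rows T y ↔ (x, y) ∈ T := mem_rows hT.1
  constructor
  · rintro ⟨i, hi, hμi, k, hik, hk, hret, hstrict, rfl⟩
    obtain ⟨m, hm, m', hm', hmm', hmin, hsec⟩ := exists_two_smallest (A := Λ.rows T i)
      (by rw [← rowN_eq_card_rows hT.1 (by omega), hμ i (by omega)]; omega)
    have hmin' : ∀ x, (x, i) ∈ T → m ≤ x := fun x hx => hmin x (hrows.2 hx)
    obtain ⟨hmk, hgap⟩ := (hT.mem_and_gap_iff hd hμ (hrows.1 hm) hmin' hik (by omega)).2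
      ⟨hret, hstrict⟩
    have hs : IsRotationSite T i k m m' := ⟨hik, hmm', hrows.1 hm, hrows.1 hm', hmk, hmin',
      fun x hx hxm => hsec x (hrows.2 hx) hxm, hgap⟩
    refine ⟨(m, i), hT.rotationAt_iff.2 ⟨k, m', hs, hT'.eq_of_rowN_eq (hs.isTree_rotate hT)
      fun y hy => ?_⟩⟩
    rw [hμ' y hy, hs.rowN_rotate_eq hT hlen hμ hy]
  · rintro ⟨⟨m, i⟩, hrot⟩
    obtain ⟨k, m', hs, rfl⟩ := hT.rotationAt_iff.1 hrot
    have hk : k ≤ Λ.top := (hT.1 hs.mem_above).1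
    have hik := hs.lt_row
    have hμi := hs.one_lt_rowN hT
    rw [hμ i (by omega)] at hμi
    obtain ⟨hret, hstrict⟩ := (hT.mem_and_gap_iff hd hμ hs.mem_corner hs.le_of_mem hik hk).1
      ⟨hs.mem_above, hs.notMem_between⟩
    refine ⟨i, by omega, by omega, k, hik, by omega, hret, hstrict, ?_⟩
    refine List.ext_getElem (by simp [hlen, hlen']) fun y hy _ => ?_
    rw [← List.getD_eq_getElem _ 0 hy, ← List.getD_eq_getElem _ 0 (by simpa [hlen, hlen'] using hy)]
    have := hs.rowN_rotate_eq hT hlen hμ (y := y) (by omega)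
    rw [hμ' y (by omega)] at this
    omega

end Staircase

lemma List.sum_take_add_one_eq (l : List ℕ) (i : ℕ) :
    (l.take (i + 1)).sum = (l.take i).sum + l.getD i 0 := by
  rw [List.take_add_one, List.sum_append, List.getD_eq_getElem?_getD]
  cases l[i]? <;> simp

lemma List.sum_take_eq_sum_range (l : List ℕ) (n : ℕ) :
    (l.take n).sum = ∑ t ∈ Finset.range n, l.getD t 0 := by
  induction n with
  | zero => simp
  | succ n ih => rw [List.sum_take_add_one_eq, ih, Finset.sum_range_succ]

namespace IsIncrement

variable {ν δ : List ℕ} (hδ : IsIncrement ν δ)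
include hδ

lemma getD_le (t : ℕ) : δ.getD t 0 ≤ ν.getD (t + 1) 0 := by
  rcases lt_or_ge t δ.length with ht | ht
  · exact hδ.2 t ht
  · rw [List.getD_eq_default _ _ ht]
    exact Nat.zero_le _

lemma sum_drop_le (y : ℕ) : (δ.drop y).sum ≤ (ν.drop (y + 1)).sum := by
  obtain ⟨a, ν', rfl⟩ := List.exists_cons_of_length_pos (by have := hδ.1; omega : 0 < ν.length)
  have hlen : δ.length = ν'.length := by simpa using hδ.1
  have h := List.forall₂_of_length_eq_of_get (R := (· ≤ ·)) hlen fun i h₁ h₂ => by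
    have := hδ.2 i h₁
    rwa [List.getD_cons_succ, List.getD_eq_getElem _ _ h₁, List.getD_eq_getElem _ _ h₂] at this
  simpa using (List.forall₂_drop y h).sum_le_sum

lemma sum_take_add_sum_drop_le (y : ℕ) : (ν.take (y + 1)).sum + (δ.drop y).sum ≤ ν.sum := by
  have := hδ.sum_drop_le y
  have := List.sum_take_add_sum_drop ν (y + 1)
  omega

lemma sum_le : δ.sum ≤ ν.sum :=
  (Nat.le_add_left _ _).trans (by simpa using hδ.sum_take_add_sum_drop_le 0)

end IsIncrement

/-- The shape `F_{δ,ν}`: row `y` runs from the path `ν̂` to the path `ν̌`. -/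
def dnStaircase (ν δ : List ℕ) (hδ : IsIncrement ν δ) : Staircase where
  top := δ.length
  lo y := ν.sum - ((ν.take (y + 1)).sum + (δ.drop y).sum)
  hi y := ((nuCheck ν δ).take (y + 1)).sum
  lo_anti := antitone_nat_of_succ_le fun y => by
    have := hδ.getD_le y
    have := List.sum_take_add_one_eq ν (y + 1)
    have := List.sum_take_add_sum_drop δ y
    have := List.sum_take_add_sum_drop δ (y + 1)
    have := List.sum_take_add_one_eq δ y
    omega
  hi_mono := monotone_nat_of_le_succ fun y => by
    rw [nuCheck, List.take_succ_cons, List.take_succ_cons, List.sum_cons, List.sum_cons,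
      List.sum_take_add_one_eq]
    omega
  lo_le_hi y := by
    rw [nuCheck, List.take_succ_cons, List.sum_cons]
    have := List.sum_take_add_sum_drop δ y
    have := hδ.sum_le
    omega

namespace IsIncrement

variable {ν δ : List ℕ} (hδ : IsIncrement ν δ)
include hδ

lemma hi_eq (y : ℕ) : (dnStaircase ν δ hδ).hi y = ν.sum - δ.sum + (δ.take y).sum := by
  simp only [dnStaircase, nuCheck, List.take_succ_cons, List.sum_cons]

lemma hi_succ (t : ℕ) :
    (dnStaircase ν δ hδ).hi (t + 1) = (dnStaircase ν δ hδ).hi t + δ.getD t 0 := by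
  rw [hδ.hi_eq, hδ.hi_eq, List.sum_take_add_one_eq, Nat.add_assoc]

lemma hi_sub_lo (y : ℕ) :
    (dnStaircase ν δ hδ).hi y - (dnStaircase ν δ hδ).lo y = (ν.take (y + 1)).sum := by
  rw [hδ.hi_eq, show (dnStaircase ν δ hδ).lo y =
    ν.sum - ((ν.take (y + 1)).sum + (δ.drop y).sum) from rfl]
  have := hδ.sum_le
  have := List.sum_take_add_sum_drop δ y
  have := hδ.sum_take_add_sum_drop_le y
  omega

lemma ldn_eq_pts : Ldn ν δ = (dnStaircase ν δ hδ).pts := by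
  ext ⟨x, y⟩
  simp only [Ldn, Staircase.pts, dnStaircase, Set.mem_ofPred_eq]
  have := hδ.1
  omega

lemma incomp_iff {p q : ℕ × ℕ} (hp : p ∈ Ldn ν δ) (hq : q ∈ Ldn ν δ) :
    Incomp (nuCheck ν δ) p q ↔
      (dnStaircase ν δ hδ).Crossing p q ∨ (dnStaircase ν δ hδ).Crossing q p := by
  have hlen : (nuCheck ν δ).length = ν.length := by rw [nuCheck, List.length_cons, hδ.1]
  simp only [Incomp, Lpts, Set.mem_ofPred_eq, Staircase.Crossing, dnStaircase, hlen]
  constructor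
  · rintro ⟨⟨h1, h2⟩ | ⟨h1, h2⟩, -, h3⟩
    · rw [min_eq_left h2.le, max_eq_right h1.le] at h3
      exact Or.inl ⟨h1, h2, h3⟩
    · rw [min_eq_right h2.le, max_eq_left h1.le] at h3
      exact Or.inr ⟨h1, h2, h3⟩
  · rintro (⟨h1, h2, h3⟩ | ⟨h1, h2, h3⟩)
    · rw [min_eq_left h2.le, max_eq_right h1.le]
      exact ⟨Or.inl ⟨h1, h2⟩, hp.1, h3⟩
    · rw [min_eq_right h2.le, max_eq_left h1.le]
      exact ⟨Or.inr ⟨h1, h2⟩, hq.1, h3⟩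

lemma isDNTree_iff {T : Set (ℕ × ℕ)} : IsDNTree ν δ T ↔ (dnStaircase ν δ hδ).IsTree T := by
  have hcompat : ∀ {T}, T ⊆ Ldn ν δ →
      (PairwiseCompat (nuCheck ν δ) T ↔ (dnStaircase ν δ hδ).NonCrossing T) := fun hT =>
    ⟨fun h p hp q hq hpq => h p hp q hq ((hδ.incomp_iff (hT hp) (hT hq)).2 (Or.inl hpq)),
      fun h p hp q hq hpq => ((hδ.incomp_iff (hT hp) (hT hq)).1 hpq).elim (h p hp q hq)
        (h q hq p hp)⟩
  simp only [IsDNTree, Staircase.IsTree, ← hδ.ldn_eq_pts]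
  exact and_congr_right fun hT => and_congr (hcompat hT)
    (forall_congr' fun T' => imp_congr_right fun _ => forall_congr' fun hT' =>
      imp_congr_left (hcompat hT'))

lemma isNuPath_iff {μ : List ℕ} :
    IsNuPath ν μ ↔
      μ.length = ν.length ∧ (dnStaircase ν δ hδ).IsRowProfile (μ.getD · 0 + 1) := by
  have hsum : ∀ n, ∑ t ∈ Finset.range n, (μ.getD t 0 + 1) = (μ.take n).sum + n := fun n => by
    rw [Finset.sum_add_distrib, ← List.sum_take_eq_sum_range, Finset.sum_const,
      Finset.card_range, smul_eq_mul, mul_one]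
  have htop : (dnStaircase ν δ hδ).top + 1 = ν.length := hδ.1
  simp only [IsNuPath, Staircase.IsRowProfile, hsum, hδ.hi_sub_lo, Nat.add_pos_right _ one_pos,
    implies_true, true_and]
  refine and_congr_right fun hlen => ?_
  rw [List.take_of_length_le (by omega : μ.length ≤ _),
    List.take_of_length_le (by omega : ν.length ≤ _)]
  constructor
  · rintro ⟨hle, heq⟩
    exact ⟨fun y _ => by have := hle (y + 1); omega, by omega⟩
  · rintro ⟨hle, heq⟩
    refine ⟨fun j => ?_, by omega⟩
    rcases j with _ | y
    · simp
    rcases le_or_gt y (dnStaircase ν δ hδ).top with hy | hy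
    · have := hle y hy
      omega
    · rw [List.take_of_length_le (by omega), List.take_of_length_le (by omega)]
      omega

end IsIncrement

theorem dn_flushing_bijection_general (ν δ : List ℕ) (hδ : IsIncrement ν δ) :
    (∀ μ, IsNuPath ν μ →
      ∃! T : Set (ℕ × ℕ), IsDNTree ν δ T ∧
        ∀ i, i < ν.length → rowN T i = μ.getD i 0 + 1) ∧
    (∀ T, IsDNTree ν δ T →
      ∃! μ : List ℕ, IsNuPath ν μ ∧
        ∀ i, i < ν.length → rowN T i = μ.getD i 0 + 1) ∧
    (∀ μ μ' T T', IsNuPath ν μ → IsNuPath ν μ' → IsDNTree ν δ T → IsDNTree ν δ T' →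
      (∀ i, i < ν.length → rowN T i = μ.getD i 0 + 1) →
      (∀ i, i < ν.length → rowN T' i = μ'.getD i 0 + 1) →
      (DRot δ μ μ' ↔ TreeRotation (nuCheck ν δ) T T')) := by
  set Λ := dnStaircase ν δ hδ
  have hlen : ν.length = Λ.top + 1 := hδ.1.symm
  have hrows : ∀ {T : Set (ℕ × ℕ)} {c : ℕ → ℕ},
      (∀ i, i < ν.length → rowN T i = c i) ↔ ∀ y ≤ Λ.top, rowN T y = c y := by
    simp only [hlen, Nat.lt_succ_iff, implies_true]
  simp only [hδ.isDNTree_iff, hrows]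
  refine ⟨fun μ hμ => ?_, fun T hT => ?_, fun μ μ' T T' hμ hμ' hT hT' hc hc' => ?_⟩
  · obtain ⟨T, hT, hc⟩ := Λ.exists_isTree_rowN (hδ.isNuPath_iff.1 hμ).2
    exact ⟨T, ⟨hT, hc⟩, fun T' ⟨hT', hc'⟩ =>
      hT'.eq_of_rowN_eq hT fun y hy => (hc' y hy).trans (hc y hy).symm⟩
  · set μ := (List.range ν.length).map (rowN T · - 1)
    have hget : ∀ y ≤ Λ.top, rowN T y = μ.getD y 0 + 1 := fun y hy => by
      have := hT.isRowProfile.1 y hy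
      rw [List.getD_eq_getElem _ _ (by simp [μ]; omega)]
      simp only [μ, List.getElem_map, List.getElem_range]
      omega
    refine ⟨μ, ⟨hδ.isNuPath_iff.2 ⟨by simp [μ], hT.isRowProfile.congr hget⟩, hget⟩,
      fun μ' ⟨hμ', hc'⟩ => List.ext_getElem (by rw [hμ'.1]; simp [μ]) fun y h₁ h₂ => ?_⟩
    have := (hc' y (by rw [hμ'.1] at h₁; omega)).symm.trans (hget y (by rw [hμ'.1] at h₁; omega))
    rwa [List.getD_eq_getElem _ _ h₁, List.getD_eq_getElem _ _ h₂, Nat.add_right_cancel_iff] at this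
  · exact hT.dRot_iff_treeRotation _ hT' hδ.hi_succ (hμ.1.trans hlen) (hμ'.1.trans hlen) hc hc'

/-- For every ν-path `μ` there is a unique (δ,ν)-tree with
exactly `μ_i + 1` points at height `i` for each `i`; this defines a bijection
(the right flushing) between ν-paths and (δ,ν)-trees.  Moreover two ν-paths
are related by a δ-rotation if and only if the corresponding trees are related
by a ν̌-rotation. -/
theorem dn_flushing_bijection (ν δ : List ℕ) (hν : ν ≠ []) (hδ : IsIncrement ν δ) :
    (∀ μ, IsNuPath ν μ →
      ∃! T : Set (ℕ × ℕ), IsDNTree ν δ T ∧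
        ∀ i, i < ν.length → rowN T i = μ.getD i 0 + 1) ∧
    (∀ T, IsDNTree ν δ T →
      ∃! μ : List ℕ, IsNuPath ν μ ∧
        ∀ i, i < ν.length → rowN T i = μ.getD i 0 + 1) ∧
    (∀ μ μ' T T', IsNuPath ν μ → IsNuPath ν μ' → IsDNTree ν δ T → IsDNTree ν δ T' →
      (∀ i, i < ν.length → rowN T i = μ.getD i 0 + 1) →
      (∀ i, i < ν.length → rowN T' i = μ'.getD i 0 + 1) →
      (DRot δ μ μ' ↔ TreeRotation (nuCheck ν δ) T T')) :=
  dn_flushing_bijection_general ν δ hδ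
end
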